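/- arXiv:1901.04066 — 11 statements merged into one kernel-verified Lean document; each statement's English description precedes it below -/
import Mathlib

section
/- Let I ⊆ ℝ be an open interval and r : I → ℝ a twice differentiable function with r(t) > 0 for all t ∈ I, satisfying the catenoid ODE 4·r(t)·r''(t) − 4·r'(t)² + r(t)⁴ − 1 = 0 on I. Then the function t ↦ (1 − r(t)²)²/(4·r(t)²) + (r'(t)/r(t))² is constant on I. -/
/-!
Along any solution, the derivative of `F = (1 - r²)²/(4r²) + (r'/r)²` equals
`r' · (4 r r'' - 4 r'² + r⁴ - 1) / (2 r³)`, which vanishes by the ODE.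
-/

theorem Convex.eq_of_forall_hasDerivAt_zero {𝕜 G : Type*} [RCLike 𝕜] [NormedAddCommGroup G]
    [NormedSpace 𝕜 G] {f : 𝕜 → G} {s : Set 𝕜} (hs : Convex ℝ s)
    (hf : ∀ x ∈ s, HasDerivAt f 0 x) {x y : 𝕜} (hx : x ∈ s) (hy : y ∈ s) : f x = f y := by
  have h := hs.norm_image_sub_le_of_norm_hasDerivWithin_le (f' := fun _ => 0) (C := 0)
    (fun z hz => (hf z hz).hasDerivWithinAt) (fun _ _ => by simp) hx hy
  simpa [sub_eq_zero, eq_comm] using h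

noncomputable def catenoidFirstIntegral (r r' : ℝ → ℝ) (t : ℝ) : ℝ :=
  (1 - r t ^ 2) ^ 2 / (4 * r t ^ 2) + (r' t / r t) ^ 2

theorem hasDerivAt_catenoidFirstIntegral {r r' : ℝ → ℝ} {t r''t : ℝ}
    (hr : HasDerivAt r (r' t) t) (hr' : HasDerivAt r' r''t t) (hrt : r t ≠ 0) :
    HasDerivAt (catenoidFirstIntegral r r')
      (r' t * (4 * r t * r''t - 4 * r' t ^ 2 + r t ^ 4 - 1) / (2 * r t ^ 3)) t := by
  unfold catenoidFirstIntegral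
  have hsq := hr.fun_pow 2
  have h := (((hsq.const_sub 1).fun_pow 2).fun_div (hsq.const_mul 4) (by positivity)).fun_add
    ((hr'.fun_div hr hrt).fun_pow 2)
  refine h.congr_deriv ?_
  norm_num only [Nat.cast_ofNat, pow_one]
  field_simp
  ring

theorem firstIntegral_of_catenoid_ode_general
    (I : Set ℝ) (hIconv : Convex ℝ I)
    (r r' r'' : ℝ → ℝ)
    (hr : ∀ t ∈ I, HasDerivAt r (r' t) t)
    (hr' : ∀ t ∈ I, HasDerivAt r' (r'' t) t)
    (hpos : ∀ t ∈ I, 0 < r t)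
    (hode : ∀ t ∈ I, 4 * r t * r'' t - 4 * (r' t) ^ 2 + (r t) ^ 4 - 1 = 0) :
    ∀ s ∈ I, ∀ t ∈ I,
      (1 - (r s) ^ 2) ^ 2 / (4 * (r s) ^ 2) + (r' s / r s) ^ 2
        = (1 - (r t) ^ 2) ^ 2 / (4 * (r t) ^ 2) + (r' t / r t) ^ 2 := by
  have hderiv : ∀ t ∈ I, HasDerivAt (catenoidFirstIntegral r r') 0 t := fun t ht => by
    simpa [hode t ht] using
      hasDerivAt_catenoidFirstIntegral (hr t ht) (hr' t ht) (hpos t ht).ne'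
  intro s hs t ht
  exact hIconv.eq_of_forall_hasDerivAt_zero hderiv hs ht

/-- The expression `(1 - r²)²/(4r²) + (r'/r)²` is a first integral of the catenoid ODE
`4 r r'' - 4 (r')² + r⁴ - 1 = 0` for a positive, twice differentiable profile `r` on an
open interval `I`. -/
theorem firstIntegral_of_catenoid_ode
    (I : Set ℝ) (hIopen : IsOpen I) (hIconv : Convex ℝ I)
    (r r' r'' : ℝ → ℝ)
    (hr : ∀ t ∈ I, HasDerivAt r (r' t) t)
    (hr' : ∀ t ∈ I, HasDerivAt r' (r'' t) t)
    (hpos : ∀ t ∈ I, 0 < r t)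
    (hode : ∀ t ∈ I, 4 * r t * r'' t - 4 * (r' t) ^ 2 + (r t) ^ 4 - 1 = 0) :
    ∀ s ∈ I, ∀ t ∈ I,
      (1 - (r s) ^ 2) ^ 2 / (4 * (r s) ^ 2) + (r' s / r s) ^ 2
        = (1 - (r t) ^ 2) ^ 2 / (4 * (r t) ^ 2) + (r' t / r t) ^ 2 :=
  firstIntegral_of_catenoid_ode_general I hIconv r r' r'' hr hr' hpos hode
end

section
/- For every κ > 0 there exist T > 0 and a nonconstant, T-periodic, twice continuously differentiable function r : ℝ → ℝ with r(t) > 0 for all t, such that 4·r·r'' − 4·(r')² + r⁴ − 1 = 0 on ℝ, the first integral (1−r²)²/(4r²) + (r'/r)² is identically equal to κ², and the minimum value of r equals √(κ²+1) − κ while the maximum value of r equals √(κ²+1) + κ. -/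
/-!
Writing `r = exp u`, the catenoid equation becomes `u'' = -sinh u cosh u` and the first integral
becomes the energy `u'² + sinh² u`. On the level set `κ²` put `sinh u = κ sin φ`; then
`u' = κ cos φ` holds exactly when `φ' = cosh u = √(1 + κ² sin² φ)`. This autonomous equation has
a positive, `2π`-periodic right-hand side, so inverting a primitive of its reciprocal gives a
global solution that sweeps out all angles and gains `2π` over a fixed time `T`. Hence
`r = exp (arsinh (κ sin φ)) = κ sin φ + √(1 + κ² sin² φ)` is `T`-periodic and fills
`[√(κ²+1) - κ, √(κ²+1) + κ]`.
-/

open Real Function Filter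

lemma surjective_of_hasDerivAt_ge {G G' : ℝ → ℝ} {c : ℝ} (hG : ∀ x, HasDerivAt G (G' x) x)
    (hc : 0 < c) (hG' : ∀ x, c ≤ G' x) : Surjective G := by
  have hmono : Monotone fun x => G x - c * x :=
    monotone_of_hasDerivAt_nonneg (fun x => (hG x).sub ((hasDerivAt_id x).const_mul c))
      fun x => by simpa using hG' x
  have hlin : Tendsto (fun x => c * x + (G 0 - c * 0)) atTop atTop :=
    tendsto_atTop_add_const_right _ _ (tendsto_id.const_mul_atTop hc)
  have hlin' : Tendsto (fun x => c * x + (G 0 - c * 0)) atBot atBot :=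
    tendsto_atBot_add_const_right _ _ (tendsto_id.const_mul_atBot hc)
  refine continuous_iff_continuousAt.2 (fun x => (hG x).continuousAt) |>.surjective ?_ ?_
  · refine tendsto_atTop_mono' _ ?_ hlin
    filter_upwards [eventually_ge_atTop 0] with x hx
    linarith [hmono hx]
  · refine tendsto_atBot_mono' _ ?_ hlin'
    filter_upwards [eventually_le_atBot 0] with x hx
    linarith [hmono hx]

theorem contDiff_succ_of_hasDerivAt_comp {g φ : ℝ → ℝ} {n : ℕ} (hg : ContDiff ℝ n g)
    (hφ : ∀ t, HasDerivAt φ (g (φ t)) t) : ContDiff ℝ (n + 1) φ := by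
  have hdiff : Differentiable ℝ φ := fun t => (hφ t).differentiableAt
  have hderiv : deriv φ = g ∘ φ := funext fun t => (hφ t).deriv
  induction n with
  | zero =>
    exact contDiff_succ_iff_deriv.2
      ⟨hdiff, by simp, hderiv ▸ hg.comp (contDiff_zero.2 hdiff.continuous)⟩
  | succ k ih =>
    refine contDiff_succ_iff_deriv.2 ⟨hdiff, by simp, hderiv ▸ hg.comp ?_⟩
    exact_mod_cast ih (hg.of_le (by exact_mod_cast k.le_succ))

theorem Function.Periodic.exists_surjective_hasDerivAt_comp {g : ℝ → ℝ} {p : ℝ}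
    (hper : Periodic g p) (hp : 0 < p) (hg : Continuous g) (hpos : ∀ x, 0 < g x) :
    ∃ (φ : ℝ → ℝ) (T : ℝ), 0 < T ∧ Surjective φ ∧ (∀ t, HasDerivAt φ (g (φ t)) t) ∧
      ∀ t, φ (t + T) = φ t + p := by
  obtain ⟨C, hC⟩ := (hper.isBounded_of_continuous hp.ne' hg).bddAbove
  have hgC : ∀ x, g x ≤ C := fun x => hC ⟨x, rfl⟩
  have hC0 : 0 < C := (hpos 0).trans_le (hgC 0)
  set G : ℝ → ℝ := fun x => ∫ s in (0 : ℝ)..x, (g s)⁻¹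
  have hcont : Continuous fun x => (g x)⁻¹ := hg.inv₀ fun x => (hpos x).ne'
  have hG : ∀ x, HasDerivAt G (g x)⁻¹ x := fun x =>
    (hcont.integral_hasStrictDerivAt 0 x).hasDerivAt
  have hmono : StrictMono G := strictMono_of_hasDerivAt_pos hG fun x => inv_pos.2 (hpos x)
  let e : ℝ ≃o ℝ := hmono.orderIsoOfSurjective G
    (surjective_of_hasDerivAt_ge hG (inv_pos.2 hC0) fun x => inv_anti₀ (hpos x) (hgC x))
  have hGadd : ∀ x, G (x + p) = G x + G p := fun x => by
    simpa using (hper.comp (·⁻¹)).intervalIntegral_add_eq_add 0 x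
      fun a b => hcont.intervalIntegrable a b
  refine ⟨e.symm, G p, by simpa [G] using hmono hp, e.symm.surjective, fun t => ?_, fun t => ?_⟩
  · simpa using HasDerivAt.of_local_left_inverse e.symm.continuous.continuousAt
      (hG (e.symm t)) (inv_ne_zero (hpos _).ne') (Eventually.of_forall e.apply_symm_apply)
  · apply e.injective
    rw [e.apply_symm_apply]
    show t + G p = G (e.symm t + p)
    rw [hGadd]
    exact congrArg (· + G p) (e.apply_symm_apply t).symm

section ExpSubstitution

variable {u u' : ℝ → ℝ}

lemma deriv_exp_comp (hu : ∀ t, HasDerivAt u (u' t) t) :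
    deriv (fun t => exp (u t)) = fun t => exp (u t) * u' t :=
  funext fun t => (hu t).exp.deriv

lemma catenoid_ode_of_exp (hu : ∀ t, HasDerivAt u (u' t) t)
    (hu' : ∀ t, HasDerivAt u' (-(sinh (u t) * cosh (u t))) t) (t : ℝ) :
    4 * exp (u t) * deriv (deriv fun t => exp (u t)) t - 4 * (deriv (fun t => exp (u t)) t) ^ 2
      + exp (u t) ^ 4 - 1 = 0 := by
  have h : HasDerivAt (fun t => exp (u t) * u' t)
      (exp (u t) * u' t * u' t + exp (u t) * -(sinh (u t) * cosh (u t))) t :=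
    (hu t).exp.mul (hu' t)
  rw [deriv_exp_comp hu, h.deriv, sinh_eq, cosh_eq, exp_neg]
  field_simp
  ring

lemma catenoid_firstIntegral_of_exp (hu : ∀ t, HasDerivAt u (u' t) t) (t : ℝ) :
    (1 - exp (u t) ^ 2) ^ 2 / (4 * exp (u t) ^ 2) + (deriv (fun t => exp (u t)) t / exp (u t)) ^ 2
      = sinh (u t) ^ 2 + u' t ^ 2 := by
  rw [deriv_exp_comp hu, sinh_eq, exp_neg]
  field_simp
  ring

end ExpSubstitution

section Angle

variable {κ : ℝ} {φ : ℝ → ℝ}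

lemma hasDerivAt_arsinh_mul_sin_comp (hφ : ∀ t, HasDerivAt φ (cosh (arsinh (κ * sin (φ t)))) t)
    (t : ℝ) : HasDerivAt (fun t => arsinh (κ * sin (φ t))) (κ * cos (φ t)) t := by
  have h := (((hφ t).sin).const_mul κ).arsinh
  rw [cosh_arsinh] at h
  refine h.congr_deriv ?_
  have : 0 < √(1 + (κ * sin (φ t)) ^ 2) := sqrt_pos.2 (by positivity)
  rw [smul_eq_mul]
  field_simp

lemma hasDerivAt_mul_cos_comp (hφ : ∀ t, HasDerivAt φ (cosh (arsinh (κ * sin (φ t)))) t) (t : ℝ) :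
    HasDerivAt (fun t => κ * cos (φ t))
      (-(sinh (arsinh (κ * sin (φ t))) * cosh (arsinh (κ * sin (φ t))))) t := by
  refine (((hφ t).cos).const_mul κ).congr_deriv ?_
  rw [sinh_arsinh]
  ring

end Angle

lemma exp_arsinh_eq (x : ℝ) : exp (arsinh x) = √(x ^ 2 + 1) + x := by
  rw [exp_arsinh, add_comm, add_comm 1]

lemma exp_arsinh_mul_sin_mem_Icc {κ : ℝ} (hκ : 0 ≤ κ) (x : ℝ) :
    exp (arsinh (κ * sin x)) ∈ Set.Icc (√(κ ^ 2 + 1) - κ) (√(κ ^ 2 + 1) + κ) := by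
  have hlo : exp (arsinh (-κ)) = √(κ ^ 2 + 1) - κ := by rw [exp_arsinh_eq, neg_sq, sub_eq_add_neg]
  rw [← hlo, ← exp_arsinh_eq]
  constructor <;> gcongr
  · nlinarith [neg_one_le_sin x]
  · nlinarith [sin_le_one x]

/-- For every `κ > 0` there is a positive period `T` and a nonconstant, `T`-periodic,
positive `C²` solution `r : ℝ → ℝ` of the catenoid ODE `4 r r'' - 4 (r')² + r⁴ - 1 = 0`
whose first integral `(1-r²)²/(4r²) + (r'/r)²` is identically `κ²`, and which oscillates
exactly between `√(κ²+1) - κ` and `√(κ²+1) + κ`. -/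
theorem exists_periodic_catenoid_profile (κ : ℝ) (hκ : 0 < κ) :
    ∃ (T : ℝ) (r : ℝ → ℝ), 0 < T ∧
      ContDiff ℝ 2 r ∧
      Function.Periodic r T ∧
      (∃ s t : ℝ, r s ≠ r t) ∧
      (∀ t, 0 < r t) ∧
      (∀ t, 4 * r t * deriv (deriv r) t - 4 * (deriv r t) ^ 2 + (r t) ^ 4 - 1 = 0) ∧
      (∀ t, (1 - (r t) ^ 2) ^ 2 / (4 * (r t) ^ 2) + (deriv r t / r t) ^ 2 = κ ^ 2) ∧
      (∀ t, Real.sqrt (κ ^ 2 + 1) - κ ≤ r t) ∧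
      (∃ t, r t = Real.sqrt (κ ^ 2 + 1) - κ) ∧
      (∀ t, r t ≤ Real.sqrt (κ ^ 2 + 1) + κ) ∧
      (∃ t, r t = Real.sqrt (κ ^ 2 + 1) + κ) := by
  have hspeed : ContDiff ℝ 1 fun x => cosh (arsinh (κ * sin x)) := by fun_prop
  obtain ⟨φ, T, hT, hsurj, hφ, hφT⟩ := Periodic.exists_surjective_hasDerivAt_comp
    (fun x => by simp only [sin_add_two_pi]) two_pi_pos hspeed.continuous fun x => cosh_pos _
  obtain ⟨tmin, htmin⟩ := hsurj (-(π / 2))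
  obtain ⟨tmax, htmax⟩ := hsurj (π / 2)
  have hu := hasDerivAt_arsinh_mul_sin_comp hφ
  have hmin : exp (arsinh (κ * sin (φ tmin))) = √(κ ^ 2 + 1) - κ := by
    rw [htmin, sin_neg, sin_pi_div_two, exp_arsinh_eq]; ring_nf
  have hmax : exp (arsinh (κ * sin (φ tmax))) = √(κ ^ 2 + 1) + κ := by
    rw [htmax, sin_pi_div_two, mul_one, exp_arsinh_eq]
  refine ⟨T, fun t => exp (arsinh (κ * sin (φ t))), hT, ?_,
    fun t => by simp only [hφT, sin_add_two_pi],
    ⟨tmin, tmax, by simp only [hmin, hmax]; linarith⟩, fun t => exp_pos _,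
    catenoid_ode_of_exp hu (hasDerivAt_mul_cos_comp hφ), fun t => ?_,
    fun t => (exp_arsinh_mul_sin_mem_Icc hκ.le _).1, ⟨tmin, hmin⟩,
    fun t => (exp_arsinh_mul_sin_mem_Icc hκ.le _).2, ⟨tmax, hmax⟩⟩
  · have := contDiff_succ_of_hasDerivAt_comp (n := 1) hspeed hφ
    fun_prop
  · rw [catenoid_firstIntegral_of_exp hu, sinh_arsinh]
    linear_combination κ ^ 2 * sin_sq_add_cos_sq (φ t)
end

section
/- Let κ > 0 and let r : I → (0,1) be a twice differentiable function on an open interval I satisfying (1−r(t)²)²/(4r(t)²) + (r'(t)/r(t))² = κ² on I. Define F : ℝ × I → ℂ by F(θ,t) = r(t)·e^{iκθ}. Then for all (θ,t) ∈ ℝ × I one has ∂²F/∂θ² + ∂²F/∂t² + (2·conj(F)/(1−|F|²))·((∂F/∂θ)² + (∂F/∂t)²) = e^{iκθ}·(4·r(t)·r''(t) − 4·r'(t)² + r(t)⁴ − 1)/(4·r(t)). In particular, F satisfies the harmonic map equation into the Poincaré disk (i.e., the left-hand side vanishes identically) if and only if 4 r r'' − 4 (r')² + r⁴ − 1 = 0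 on I. -/
/-!
Writing `e = exp (iκθ)`, the map `F = r e` has `F_θθ = -κ² F`, `F_tt = r'' e`, `|F| = r` and
`conj F · e² = r e` since `|e| = 1`, so its harmonic-map expression is `e` times the real
quantity `r'' - κ² r + 2r (r'² - κ² r²)/(1 - r²)`. Eliminating `κ²` with the first integral
turns this quantity into `(4 r r'' - 4 r'² + r⁴ - 1)/(4r)`; since `e ≠ 0` and `r > 0`, the
expression vanishes exactly when the catenoid ODE holds.
-/

open Complex

/-- Four times `F_{z z̄} + (2 conj F/(1 - |F|²)) F_z F_{z̄}` for `z = -θ + it`. -/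
noncomputable def poincareDiskTension (F : ℝ → ℝ → ℂ) (θ t : ℝ) : ℂ :=
  deriv (fun a => deriv (fun b => F b t) a) θ
    + deriv (fun a => deriv (fun b => F θ b) a) t
    + (2 * (starRingEnd ℂ) (F θ t) / (1 - ((‖F θ t‖ : ℝ) : ℂ) ^ 2)) *
        ((deriv (fun b => F b t) θ) ^ 2 + (deriv (fun b => F θ b) t) ^ 2)

theorem hasDerivAt_mul_cexp_mul_ofReal (c k : ℂ) (θ : ℝ) :
    HasDerivAt (fun b : ℝ => c * exp (k * b)) (c * k * exp (k * θ)) θ := by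
  have hlin : HasDerivAt (fun b : ℝ => k * b) k θ := by
    simpa using (ofRealCLM.hasDerivAt (x := θ)).const_mul k
  exact (hlin.cexp.const_mul c).congr_deriv (by ring)

theorem deriv_mul_cexp_mul_ofReal (c k : ℂ) :
    deriv (fun b : ℝ => c * exp (k * b)) = fun θ : ℝ => c * k * exp (k * θ) :=
  funext fun θ => (hasDerivAt_mul_cexp_mul_ofReal c k θ).deriv

theorem norm_cexp_I_mul_ofReal_mul (κ θ : ℝ) : ‖exp (I * κ * θ)‖ = 1 := by
  rw [show I * κ * θ = ((κ * θ : ℝ) : ℂ) * I by push_cast; ring, norm_exp_ofReal_mul_I]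

theorem conj_mul_sq_cexp_I_mul_ofReal_mul (κ θ : ℝ) :
    (starRingEnd ℂ) (exp (I * κ * θ)) * exp (I * κ * θ) ^ 2 = exp (I * κ * θ) := by
  rw [pow_two, ← mul_assoc, conj_mul', norm_cexp_I_mul_ofReal_mul]
  simp

theorem poincareDiskTension_of_rotational {κ t : ℝ} {R R' R'' : ℝ → ℝ}
    (hR : ∀ᶠ s in nhds t, HasDerivAt R (R' s) s) (hR' : HasDerivAt R' (R'' t) t)
    {F : ℝ → ℝ → ℂ} (hF : ∀ θ t, F θ t = (R t : ℂ) * exp (I * κ * θ)) (θ : ℝ) :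
    poincareDiskTension F θ t = exp (I * κ * θ) *
      ((R'' t - κ ^ 2 * R t + 2 * R t * (R' t ^ 2 - κ ^ 2 * R t ^ 2) / (1 - R t ^ 2) : ℝ) : ℂ) := by
  obtain rfl : F = fun (θ : ℝ) t => (R t : ℂ) * exp (I * κ * θ) := funext₂ hF
  set e := exp (I * κ * θ)
  have hDt : ∀ s, HasDerivAt R (R' s) s → HasDerivAt (fun b => (R b : ℂ) * e) (R' s * e) s :=
    fun s hs => hs.ofReal_comp.mul_const e
  have hDtt : deriv (fun a => deriv (fun b => (R b : ℂ) * e) a) t = R'' t * e := by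
    have hev : (fun a => deriv (fun b => (R b : ℂ) * e) a) =ᶠ[nhds t] fun a => (R' a : ℂ) * e :=
      hR.mono fun s hs => (hDt s hs).deriv
    rw [hev.deriv_eq]
    exact (hR'.ofReal_comp.mul_const e).deriv
  have hnorm : ‖(R t : ℂ) * e‖ = |R t| := by
    rw [norm_mul, norm_real, norm_cexp_I_mul_ofReal_mul, mul_one, Real.norm_eq_abs]
  unfold poincareDiskTension
  simp only [deriv_mul_cexp_mul_ofReal]
  rw [hDtt, (hDt t hR.self_of_nhds).deriv, hnorm, map_mul, conj_ofReal]
  push_cast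
  rw [← ofReal_pow, sq_abs, ofReal_pow]
  linear_combination
    (2 * (R t : ℂ) / (1 - (R t : ℂ) ^ 2) * (((R t : ℂ) * (I * κ)) ^ 2 + (R' t : ℂ) ^ 2)) *
        conj_mul_sq_cexp_I_mul_ofReal_mul κ θ
      + (e * R t * (κ : ℂ) ^ 2 * (1 + 2 * (R t : ℂ) ^ 2 / (1 - (R t : ℂ) ^ 2))) * I_sq

theorem catenoid_profile_identity {R R' R'' κ : ℝ} (hR : R ≠ 0) (hR1 : 1 - R ^ 2 ≠ 0)
    (hfi : (1 - R ^ 2) ^ 2 / (4 * R ^ 2) + (R' / R) ^ 2 = κ ^ 2) :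
    R'' - κ ^ 2 * R + 2 * R * (R' ^ 2 - κ ^ 2 * R ^ 2) / (1 - R ^ 2)
      = (4 * R * R'' - 4 * R' ^ 2 + R ^ 4 - 1) / (4 * R) := by
  rw [← hfi]
  field_simp
  ring

theorem harmonic_map_equation_of_catenoid_general
    (κ : ℝ) (I : Set ℝ) (hIopen : IsOpen I)
    (r r' r'' : ℝ → ℝ)
    (hr01 : ∀ t ∈ I, r t ∈ Set.Ioo (0 : ℝ) 1)
    (hr : ∀ t ∈ I, HasDerivAt r (r' t) t)
    (hr' : ∀ t ∈ I, HasDerivAt r' (r'' t) t)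
    (hfi : ∀ t ∈ I,
      (1 - (r t) ^ 2) ^ 2 / (4 * (r t) ^ 2) + (r' t / r t) ^ 2 = κ ^ 2)
    (F : ℝ → ℝ → ℂ)
    (hF : ∀ θ t, F θ t = (r t : ℂ) * Complex.exp (Complex.I * (κ : ℂ) * (θ : ℂ))) :
    (∀ θ : ℝ, ∀ t ∈ I,
      deriv (fun a => deriv (fun b => F b t) a) θ
        + deriv (fun a => deriv (fun b => F θ b) a) t
        + (2 * (starRingEnd ℂ) (F θ t) / (1 - ((‖F θ t‖ : ℝ) : ℂ) ^ 2)) *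
            ((deriv (fun b => F b t) θ) ^ 2 + (deriv (fun b => F θ b) t) ^ 2)
      = Complex.exp (Complex.I * (κ : ℂ) * (θ : ℂ)) *
          (((4 * r t * r'' t - 4 * (r' t) ^ 2 + (r t) ^ 4 - 1) / (4 * r t) : ℝ) : ℂ)) ∧
    ((∀ θ : ℝ, ∀ t ∈ I,
      deriv (fun a => deriv (fun b => F b t) a) θ
        + deriv (fun a => deriv (fun b => F θ b) a) t
        + (2 * (starRingEnd ℂ) (F θ t) / (1 - ((‖F θ t‖ : ℝ) : ℂ) ^ 2)) *
            ((deriv (fun b => F b t) θ) ^ 2 + (deriv (fun b => F θ b) t) ^ 2) = 0)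
      ↔ (∀ t ∈ I, 4 * r t * r'' t - 4 * (r' t) ^ 2 + (r t) ^ 4 - 1 = 0)) := by
  have key : ∀ θ : ℝ, ∀ t ∈ I, poincareDiskTension F θ t = exp (Complex.I * κ * θ) *
      (((4 * r t * r'' t - 4 * (r' t) ^ 2 + (r t) ^ 4 - 1) / (4 * r t) : ℝ) : ℂ) := by
    intro θ t ht
    obtain ⟨hr0, hr1⟩ := hr01 t ht
    rw [poincareDiskTension_of_rotational (Filter.eventually_of_mem (hIopen.mem_nhds ht) hr)
        (hr' t ht) hF θ,
      catenoid_profile_identity hr0.ne' (by nlinarith) (hfi t ht)]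
  refine ⟨key, fun h t ht => ?_, fun h θ t ht => (key θ t ht).trans (by simp [h t ht])⟩
  have hr0 := (hr01 t ht).1
  have hzero := (key 0 t ht).symm.trans (h 0 t ht)
  rw [mul_eq_zero, ofReal_eq_zero, div_eq_zero_iff] at hzero
  simpa [exp_ne_zero, hr0.ne'] using hzero

/-- For `F(θ,t) = r(t) e^{iκθ}` with `0 < r < 1` satisfying the first-integral relation
`(1-r²)²/(4r²) + (r'/r)² = κ²`, the harmonic-map expression
`F_{θθ} + F_{tt} + (2 conj F/(1-|F|²))((F_θ)² + (F_t)²)` equals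
`e^{iκθ} (4 r r'' - 4 (r')² + r⁴ - 1)/(4r)`; in particular `F` is a harmonic map into the
Poincaré disk iff `r` satisfies the catenoid ODE. -/
theorem harmonic_map_equation_of_catenoid
    (κ : ℝ) (hκ : 0 < κ) (I : Set ℝ) (hIopen : IsOpen I)
    (r r' r'' : ℝ → ℝ)
    (hr01 : ∀ t ∈ I, r t ∈ Set.Ioo (0 : ℝ) 1)
    (hr : ∀ t ∈ I, HasDerivAt r (r' t) t)
    (hr' : ∀ t ∈ I, HasDerivAt r' (r'' t) t)
    (hfi : ∀ t ∈ I,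
      (1 - (r t) ^ 2) ^ 2 / (4 * (r t) ^ 2) + (r' t / r t) ^ 2 = κ ^ 2)
    (F : ℝ → ℝ → ℂ)
    (hF : ∀ θ t, F θ t = (r t : ℂ) * Complex.exp (Complex.I * (κ : ℂ) * (θ : ℂ))) :
    (∀ θ : ℝ, ∀ t ∈ I,
      deriv (fun a => deriv (fun b => F b t) a) θ
        + deriv (fun a => deriv (fun b => F θ b) a) t
        + (2 * (starRingEnd ℂ) (F θ t) / (1 - ((‖F θ t‖ : ℝ) : ℂ) ^ 2)) *
            ((deriv (fun b => F b t) θ) ^ 2 + (deriv (fun b => F θ b) t) ^ 2)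
      = Complex.exp (Complex.I * (κ : ℂ) * (θ : ℂ)) *
          (((4 * r t * r'' t - 4 * (r' t) ^ 2 + (r t) ^ 4 - 1) / (4 * r t) : ℝ) : ℂ)) ∧
    ((∀ θ : ℝ, ∀ t ∈ I,
      deriv (fun a => deriv (fun b => F b t) a) θ
        + deriv (fun a => deriv (fun b => F θ b) a) t
        + (2 * (starRingEnd ℂ) (F θ t) / (1 - ((‖F θ t‖ : ℝ) : ℂ) ^ 2)) *
            ((deriv (fun b => F b t) θ) ^ 2 + (deriv (fun b => F θ b) t) ^ 2) = 0)
      ↔ (∀ t ∈ I, 4 * r t * r'' t - 4 * (r' t) ^ 2 + (r t) ^ 4 - 1 = 0)) :=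
  harmonic_map_equation_of_catenoid_general κ I hIopen r r' r'' hr01 hr hr' hfi F hF
end

section
/- For κ > 0 let r₀(κ) = √(κ²+1) − κ and H(κ) = ∫_{r₀(κ)}^{1} 2/√(4κ²u² − (1−u²)²) du. Then for every κ > 0 the integrand is well defined and positive on (r₀(κ),1) and the integral converges; the function H is strictly decreasing on (0,∞); H(κ) → π/2 as κ → 0⁺; and H(κ) → 0 as κ → ∞. (Consequently the height h(κ) = 2H(κ) of the catenoid 𝒞_κ decreases monotonically from π to 0 as κ increases from 0 to ∞.) -/
/-!
Substituting `u = √(1 + κ² sin² θ) - κ sin θ`, i.e. `(1 - u²) / (2u) = κ sin θ`, turns the radicand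
into `(2 κ u cos θ)²` and the integral `H(κ)` into `∫₀^{π/2} dθ / √(1 + κ² sin² θ)`, an integral
over a fixed interval with integrand bounded by `1` and strictly decreasing in `κ ≥ 0`.
Monotonicity is then immediate, `H(κ) → H(0) = π/2` by continuity, and `H(κ) → 0` by dominated
convergence.
-/

open MeasureTheory Filter Set Real Topology

namespace Catenoid

noncomputable def radius (κ θ : ℝ) : ℝ := √(1 + (κ * sin θ) ^ 2) - κ * sin θ

variable {κ θ : ℝ}

lemma sq_sqrt_one_add_sq (x : ℝ) : √(1 + x ^ 2) ^ 2 = 1 + x ^ 2 := sq_sqrt (by positivity)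

lemma radius_pos (κ θ : ℝ) : 0 < radius κ θ := by
  have := sq_sqrt_one_add_sq (κ * sin θ)
  have := sqrt_nonneg (1 + (κ * sin θ) ^ 2)
  rw [radius, sub_pos]
  nlinarith

lemma one_sub_radius_sq (κ θ : ℝ) : 1 - radius κ θ ^ 2 = 2 * (κ * sin θ) * radius κ θ := by
  have := sq_sqrt_one_add_sq (κ * sin θ)
  rw [radius]
  linear_combination -this

lemma radicand_radius (κ θ : ℝ) :
    4 * κ ^ 2 * radius κ θ ^ 2 - (1 - radius κ θ ^ 2) ^ 2 = (2 * κ * cos θ * radius κ θ) ^ 2 := by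
  rw [one_sub_radius_sq]
  linear_combination (-4 * κ ^ 2 * radius κ θ ^ 2) * sin_sq_add_cos_sq θ

lemma radius_zero (κ : ℝ) : radius κ 0 = 1 := by simp [radius]

lemma radius_pi_div_two (κ : ℝ) : radius κ (π / 2) = √(κ ^ 2 + 1) - κ := by
  simp [radius, add_comm]

lemma hasDerivAt_radius (κ θ : ℝ) :
    HasDerivAt (radius κ) (-(radius κ θ * κ * cos θ) / √(1 + (κ * sin θ) ^ 2)) θ := by
  have hs : HasDerivAt (fun θ => κ * sin θ) (κ * cos θ) θ := (hasDerivAt_sin θ).const_mul κ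
  have hpos : (0:ℝ) < 1 + (κ * sin θ) ^ 2 := by positivity
  refine ((((hs.fun_pow 2).const_add 1).sqrt hpos.ne').sub hs).congr_deriv ?_
  have := (sqrt_pos.2 hpos).ne'
  rw [radius]
  field_simp
  ring

lemma strictAntiOn_radius (hκ : 0 < κ) : StrictAntiOn (radius κ) (Icc 0 (π / 2)) := by
  refine strictAntiOn_of_deriv_neg (convex_Icc _ _)
    (fun θ _ => (hasDerivAt_radius κ θ).continuousAt.continuousWithinAt) fun θ hθ => ?_
  rw [interior_Icc] at hθ
  have hcos : 0 < cos θ := cos_pos_of_mem_Ioo ⟨by linarith [hθ.1, pi_pos], hθ.2⟩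
  rw [(hasDerivAt_radius κ θ).deriv, neg_div, neg_lt_zero]
  have := radius_pos κ θ
  positivity

lemma image_radius (hκ : 0 < κ) :
    radius κ '' Ioo 0 (π / 2) = Ioo (√(κ ^ 2 + 1) - κ) 1 := by
  have hanti := strictAntiOn_radius hκ
  have hpi : (0:ℝ) ≤ π / 2 := by positivity
  have hsurj := intermediate_value_Ioo' hpi
    fun θ _ => (hasDerivAt_radius κ θ).continuousAt.continuousWithinAt
  rw [radius_zero, radius_pi_div_two] at hsurj
  refine Subset.antisymm ?_ hsurj
  rintro _ ⟨θ, hθ, rfl⟩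
  constructor
  · simpa only [radius_pi_div_two] using hanti (Ioo_subset_Icc_self hθ) ⟨hpi, le_rfl⟩ hθ.2
  · simpa only [radius_zero] using hanti ⟨le_rfl, hpi⟩ (Ioo_subset_Icc_self hθ) hθ.1

lemma radicand_pos_of_mem_Ioo {u : ℝ} (hκ : 0 < κ) (hu : u ∈ Ioo (√(κ ^ 2 + 1) - κ) 1) :
    0 < 4 * κ ^ 2 * u ^ 2 - (1 - u ^ 2) ^ 2 := by
  rw [← image_radius hκ] at hu
  obtain ⟨θ, ⟨hθ₀, hθ₁⟩, rfl⟩ := hu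
  have hcos : 0 < cos θ := cos_pos_of_mem_Ioo ⟨by linarith [pi_pos], hθ₁⟩
  have := radius_pos κ θ
  rw [radicand_radius]
  positivity

lemma abs_deriv_radius_mul_integrand (hκ : 0 < κ) (hθ : θ ∈ Ioo 0 (π / 2)) :
    |-(radius κ θ * κ * cos θ) / √(1 + (κ * sin θ) ^ 2)| •
        (2 / √(4 * κ ^ 2 * radius κ θ ^ 2 - (1 - radius κ θ ^ 2) ^ 2)) =
      (√(1 + (κ * sin θ) ^ 2))⁻¹ := by
  have hcos : 0 < cos θ := cos_pos_of_mem_Ioo ⟨by linarith [pi_pos, hθ.1], hθ.2⟩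
  have hr := radius_pos κ θ
  have hS : 0 < √(1 + (κ * sin θ) ^ 2) := sqrt_pos.2 (by positivity)
  rw [radicand_radius, sqrt_sq (by positivity), neg_div, abs_neg, abs_of_pos (by positivity),
    smul_eq_mul]
  field_simp

lemma continuous_inv_sqrt_one_add_sq : Continuous fun x : ℝ => (√(1 + x ^ 2))⁻¹ :=
  (continuous_const.add (continuous_pow 2)).sqrt.inv₀
    fun x => (sqrt_pos.2 (by positivity : (0:ℝ) < 1 + x ^ 2)).ne'

lemma continuous_inv_sqrt_one_add_mul_sin_sq (κ : ℝ) :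
    Continuous fun θ => (√(1 + (κ * sin θ) ^ 2))⁻¹ :=
  continuous_inv_sqrt_one_add_sq.comp (continuous_const.mul continuous_sin)

lemma norm_inv_sqrt_one_add_sq_le_one (x : ℝ) : ‖(√(1 + x ^ 2))⁻¹‖ ≤ 1 := by
  rw [norm_of_nonneg (by positivity)]
  exact inv_le_one_of_one_le₀ (one_le_sqrt.2 (by nlinarith))

/-- `H(κ)` in the coordinate `θ` of `radius`; this is the complete elliptic integral `K(iκ)`. -/
noncomputable def halfHeight (κ : ℝ) : ℝ := ∫ θ in 0..π / 2, (√(1 + (κ * sin θ) ^ 2))⁻¹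

lemma setIntegral_two_div_sqrt_radicand_eq_halfHeight (hκ : 0 < κ) :
    ∫ u in Ioo (√(κ ^ 2 + 1) - κ) 1, 2 / √(4 * κ ^ 2 * u ^ 2 - (1 - u ^ 2) ^ 2) =
      halfHeight κ := by
  rw [← image_radius hκ, integral_image_eq_integral_abs_deriv_smul measurableSet_Ioo
    (fun θ _ => (hasDerivAt_radius κ θ).hasDerivWithinAt)
    ((strictAntiOn_radius hκ).injOn.mono Ioo_subset_Icc_self), halfHeight,
    intervalIntegral.integral_of_le (by positivity), integral_Ioc_eq_integral_Ioo]
  exact setIntegral_congr_fun measurableSet_Ioo fun θ hθ => abs_deriv_radius_mul_integrand hκ hθ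

lemma integrableOn_Ioo_two_div_sqrt_radicand (hκ : 0 < κ) :
    IntegrableOn (fun u => 2 / √(4 * κ ^ 2 * u ^ 2 - (1 - u ^ 2) ^ 2))
      (Ioo (√(κ ^ 2 + 1) - κ) 1) := by
  rw [← image_radius hκ, integrableOn_image_iff_integrableOn_abs_deriv_smul measurableSet_Ioo
    (fun θ _ => (hasDerivAt_radius κ θ).hasDerivWithinAt)
    ((strictAntiOn_radius hκ).injOn.mono Ioo_subset_Icc_self)]
  refine IntegrableOn.congr_fun ?_
    (fun θ hθ => (abs_deriv_radius_mul_integrand hκ hθ).symm) measurableSet_Ioo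
  exact (continuous_inv_sqrt_one_add_mul_sin_sq κ).integrableOn_Icc.mono_set Ioo_subset_Icc_self

lemma strictAntiOn_halfHeight : StrictAntiOn halfHeight (Ici 0) := by
  intro κ₁ (h₁ : 0 ≤ κ₁) κ₂ _ h₁₂
  refine intervalIntegral.integral_lt_integral_of_continuousOn_of_le_of_exists_lt (by positivity)
    (continuous_inv_sqrt_one_add_mul_sin_sq κ₂).continuousOn
    (continuous_inv_sqrt_one_add_mul_sin_sq κ₁).continuousOn
    (fun θ hθ => ?_) ⟨π / 2, ⟨by positivity, le_rfl⟩, ?_⟩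
  · have := sin_nonneg_of_nonneg_of_le_pi hθ.1.le (by linarith [hθ.2, pi_pos])
    gcongr
  · simp only [sin_pi_div_two, mul_one]
    gcongr

lemma continuous_halfHeight : Continuous halfHeight :=
  intervalIntegral.continuous_parametric_intervalIntegral_of_continuous'
    (f := fun κ θ => (√(1 + (κ * sin θ) ^ 2))⁻¹)
    (continuous_inv_sqrt_one_add_sq.comp (by fun_prop : Continuous fun p : ℝ × ℝ => p.1 * sin p.2))
    _ _

lemma halfHeight_zero : halfHeight 0 = π / 2 := by simp [halfHeight]

lemma tendsto_halfHeight_atTop : Tendsto halfHeight atTop (𝓝 0) := by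
  have hlim : ∀ θ ∈ uIoc 0 (π / 2),
      Tendsto (fun κ => (√(1 + (κ * sin θ) ^ 2))⁻¹) atTop (𝓝 0) := by
    intro θ hθ
    rw [uIoc_of_le (by positivity)] at hθ
    have hsin : 0 < sin θ := sin_pos_of_pos_of_lt_pi hθ.1 (by linarith [hθ.2, pi_pos])
    exact (tendsto_sqrt_atTop.comp (tendsto_atTop_add_const_left _ 1
      ((tendsto_pow_atTop two_ne_zero).comp (tendsto_id.atTop_mul_const hsin)))).inv_tendsto_atTop
  unfold halfHeight
  simpa using intervalIntegral.tendsto_integral_filter_of_dominated_convergence (fun _ => 1)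
    (Eventually.of_forall fun κ => (continuous_inv_sqrt_one_add_mul_sin_sq κ).aestronglyMeasurable)
    (Eventually.of_forall fun κ => ae_of_all _ fun θ _ => norm_inv_sqrt_one_add_sq_le_one _)
    intervalIntegrable_const (ae_of_all _ hlim)

end Catenoid

open Catenoid in
/-- Properties of the half-height `H(κ) = ∫_{√(κ²+1)-κ}^{1} 2/√(4κ²u² - (1-u²)²) du`
of the catenoid `𝒞_κ`: the integrand is well defined and positive, the integral
converges, `H` is strictly decreasing on `(0,∞)`, `H(κ) → π/2` as `κ → 0⁺`, and
`H(κ) → 0` as `κ → ∞`. -/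
theorem catenoid_height_properties (H : ℝ → ℝ)
    (hH : ∀ κ : ℝ, H κ = ∫ u in Set.Ioo (Real.sqrt (κ ^ 2 + 1) - κ) 1,
        2 / Real.sqrt (4 * κ ^ 2 * u ^ 2 - (1 - u ^ 2) ^ 2)) :
    (∀ κ : ℝ, 0 < κ →
      (∀ u ∈ Set.Ioo (Real.sqrt (κ ^ 2 + 1) - κ) 1,
        0 < 4 * κ ^ 2 * u ^ 2 - (1 - u ^ 2) ^ 2 ∧
        0 < 2 / Real.sqrt (4 * κ ^ 2 * u ^ 2 - (1 - u ^ 2) ^ 2)) ∧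
      IntegrableOn (fun u => 2 / Real.sqrt (4 * κ ^ 2 * u ^ 2 - (1 - u ^ 2) ^ 2))
        (Set.Ioo (Real.sqrt (κ ^ 2 + 1) - κ) 1)) ∧
    StrictAntiOn H (Set.Ioi 0) ∧
    Tendsto H (nhdsWithin 0 (Set.Ioi 0)) (nhds (Real.pi / 2)) ∧
    Tendsto H atTop (nhds 0) := by
  have hH_eq : EqOn halfHeight H (Ioi 0) := fun κ hκ =>
    (hH κ ▸ setIntegral_two_div_sqrt_radicand_eq_halfHeight hκ).symm
  refine ⟨fun κ hκ => ⟨fun u hu => ?_, integrableOn_Ioo_two_div_sqrt_radicand hκ⟩, ?_, ?_, ?_⟩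
  · have := radicand_pos_of_mem_Ioo hκ hu
    exact ⟨this, by positivity⟩
  · exact (strictAntiOn_halfHeight.mono Ioi_subset_Ici_self).congr hH_eq
  · rw [← halfHeight_zero]
    exact (continuous_halfHeight.tendsto 0).mono_left nhdsWithin_le_nhds
      |>.congr' (eventuallyEq_nhdsWithin_of_eqOn hH_eq)
  · exact tendsto_halfHeight_atTop.congr' <|
      (eventually_gt_atTop 0).mono fun κ hκ => hH_eq hκ
end

section
/- Let λ > 0 and define F : ℝ × (0,π) → ℂ by F(x,t) = λx + iλ·sin t. Then F takes values in the upper half-plane (Im F > 0) and satisfies, at every point, the harmonic map equation into the hyperbolic upper half-plane: ∂²F/∂x² + ∂²F/∂t² + (i/Im F)·((∂F/∂x)² + (∂F/∂t)²) = 0. -/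
/-! Writing `F = λx + i g(t)` with `g` real, the tension `F_xx + F_tt + (i / Im F)(F_x² + F_t²)`
reduces to `i (g g'' - g'² + λ²) / g`, so `F` is harmonic exactly when the profile `g` solves
`g g'' - g'² + λ² = 0`. For `g = λ sin t` this is `λ² (1 - sin² t - cos² t) = 0`, and `g > 0`
on `(0, π)`. -/

open Complex

noncomputable def hyperbolicTension (F : ℝ → ℝ → ℂ) (x t : ℝ) : ℂ :=
  deriv (fun a => deriv (fun b => F b t) a) x
    + deriv (fun a => deriv (fun b => F x b) a) t
    + (I / (((F x t).im : ℝ) : ℂ)) *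
        ((deriv (fun b => F b t) x) ^ 2 + (deriv (fun b => F x b) t) ^ 2)

lemma hasDerivAt_ofReal_mul_add_const (lam : ℝ) (c : ℂ) (a : ℝ) :
    HasDerivAt (fun b : ℝ => (lam : ℂ) * b + c) lam a := by
  simpa using ((hasDerivAt_id a).ofReal_comp.const_mul (lam : ℂ)).add_const c

lemma HasDerivAt.const_add_I_mul_ofReal {g : ℝ → ℝ} {g' t : ℝ} (c : ℂ) (h : HasDerivAt g g' t) :
    HasDerivAt (fun s => c + I * (g s : ℂ)) (I * g') t :=
  (h.ofReal_comp.const_mul I).const_add c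

theorem hyperbolicTension_eq_of_eq_ofReal_mul_add_I_mul {lam : ℝ} {g g' g'' : ℝ → ℝ}
    {F : ℝ → ℝ → ℂ} (hF : ∀ x t, F x t = lam * x + I * g t)
    (hg : ∀ t, HasDerivAt g (g' t) t) (hg' : ∀ t, HasDerivAt g' (g'' t) t)
    (x t : ℝ) (ht : g t ≠ 0) :
    hyperbolicTension F x t = I * ((g t * g'' t - g' t ^ 2 + lam ^ 2) / g t : ℝ) := by
  obtain rfl : F = fun (x t : ℝ) => lam * x + I * g t := funext₂ hF
  have hFx : deriv (fun b : ℝ => (lam : ℂ) * b + I * g t) = fun _ => (lam : ℂ) :=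
    funext fun a => (hasDerivAt_ofReal_mul_add_const lam _ a).deriv
  have hFt : deriv (fun b => (lam : ℂ) * x + I * g b) = fun a => I * g' a :=
    funext fun a => ((hg a).const_add_I_mul_ofReal _).deriv
  have hFtt : deriv (fun a => I * (g' a : ℂ)) t = I * g'' t := by
    simpa using ((hg' t).const_add_I_mul_ofReal 0).deriv
  have him : ((lam : ℂ) * x + I * g t).im = g t := by simp
  simp only [hyperbolicTension, hFx, hFt, hFtt, him, deriv_const]
  have ht' : (g t : ℂ) ≠ 0 := ofReal_ne_zero.mpr ht
  push_cast
  field_simp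
  linear_combination (I * (g' t : ℂ) ^ 2) * I_sq

/-- The map `F(x,t) = λx + iλ sin t` on `ℝ × (0,π)` takes values in the upper half-plane
and satisfies the harmonic map equation
`F_{xx} + F_{tt} + (i / Im F)((F_x)² + (F_t)²) = 0` into hyperbolic space. -/
theorem parabolic_catenoid_harmonic_map (lam : ℝ) (hlam : 0 < lam)
    (F : ℝ → ℝ → ℂ)
    (hF : ∀ x t : ℝ,
      F x t = (lam : ℂ) * (x : ℂ) + Complex.I * (lam : ℂ) * ((Real.sin t : ℝ) : ℂ)) :
    ∀ x : ℝ, ∀ t ∈ Set.Ioo (0 : ℝ) Real.pi,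
      0 < (F x t).im ∧
      deriv (fun a => deriv (fun b => F b t) a) x
        + deriv (fun a => deriv (fun b => F x b) a) t
        + (Complex.I / (((F x t).im : ℝ) : ℂ)) *
            ((deriv (fun b => F b t) x) ^ 2 + (deriv (fun b => F x b) t) ^ 2) = 0 := by
  intro x t ht
  have hF' : ∀ x t, F x t = lam * x + I * ((lam * Real.sin t : ℝ) : ℂ) := fun x t => by
    rw [hF]
    push_cast
    ring
  have hg_pos : 0 < lam * Real.sin t := mul_pos hlam (Real.sin_pos_of_pos_of_lt_pi ht.1 ht.2)
  have hprofile : lam * Real.sin t * -(lam * Real.sin t) - (lam * Real.cos t) ^ 2 + lam ^ 2 = 0 := by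
    linear_combination (-lam ^ 2) * Real.sin_sq_add_cos_sq t
  refine ⟨by simpa [hF', -ofReal_mul, -ofReal_sin] using hg_pos, ?_⟩
  refine (hyperbolicTension_eq_of_eq_ofReal_mul_add_I_mul hF' (g' := fun t => lam * Real.cos t)
    (g'' := fun t => -(lam * Real.sin t)) (fun t => (Real.hasDerivAt_sin t).const_mul lam)
    (fun t => by simpa using (Real.hasDerivAt_cos t).const_mul lam) x t hg_pos.ne').trans ?_
  rw [hprofile, zero_div, ofReal_zero, mul_zero]
end

section
/- For d ∈ (0,1) let d₁ = √((1−d)/(1+d)) and Λ(d) = ∫_{d₁}^{1} 2/√(d²(1+v²)² − (1−v²)²) dv. Then for every d ∈ (0,1): the expression d²(1+v²)² − (1−v²)² is positive for v ∈ (d₁,1) and the integral converges; Λ(d) > π/2; Λ is strictly increasing on (0,1); Λ(d) → π/2 as d → 0⁺; and Λ(d) → ∞ as d → 1⁻. (Consequently the height h_d = 2Λ(d) of the tall rectangle Σ_d is always greater than π, increases monotonically in d, tends to π as d → 0 and to ∞ as d → 1.) -/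
/-!
The substitution `k sin φ = (1 - v²) / (1 + v²)` turns the half-height into the complete
elliptic integral `K(k) = ∫₀^{π/2} dφ / √(1 - k² sin² φ)`. Its integrand increases strictly
with `k`, equals `1` at `k = 0` and is at most `1 / √(1 - k²)`, which gives `K(k) > π/2`,
monotonicity and the limit at `0`. Since `√(1 - k² sin² φ) ≤ √(1 - k²) + (π/2 - φ)`, also
`K(k) ≥ log (1 + π / (2 √(1 - k²)))`, which blows up as `k → 1`.
-/

open MeasureTheory Filter

namespace TallRectangle

open Real Set Topology

noncomputable def ellipticK (k : ℝ) : ℝ :=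
  ∫ φ in (0)..(π / 2), (√(1 - k ^ 2 * sin φ ^ 2))⁻¹

lemma one_sub_sq_mul_sin_sq_pos {k : ℝ} (hk : k ^ 2 < 1) (φ : ℝ) :
    0 < 1 - k ^ 2 * sin φ ^ 2 := by
  nlinarith [sin_sq_le_one φ, sq_nonneg k]

lemma continuous_ellipticK_integrand {k : ℝ} (hk : k ^ 2 < 1) :
    Continuous fun φ => (√(1 - k ^ 2 * sin φ ^ 2))⁻¹ :=
  (by fun_prop : Continuous fun φ => √(1 - k ^ 2 * sin φ ^ 2)).inv₀
    fun φ => (sqrt_pos.2 (one_sub_sq_mul_sin_sq_pos hk φ)).ne'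

lemma ellipticK_zero : ellipticK 0 = π / 2 := by
  simp [ellipticK]

lemma strictMonoOn_ellipticK : StrictMonoOn ellipticK (Ico 0 1) := by
  intro a ⟨ha0, _⟩ b ⟨_, hb1⟩ hab
  have hab2 : a ^ 2 < b ^ 2 := by nlinarith
  have hb : b ^ 2 < 1 := by nlinarith
  have ha : a ^ 2 < 1 := hab2.trans hb
  refine intervalIntegral.integral_lt_integral_of_continuousOn_of_le_of_exists_lt
    (by positivity) (continuous_ellipticK_integrand ha).continuousOn
    (continuous_ellipticK_integrand hb).continuousOn (fun φ _ => ?_)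
    ⟨π / 2, right_mem_Icc.2 (by positivity), ?_⟩
  · refine inv_anti₀ (sqrt_pos.2 (one_sub_sq_mul_sin_sq_pos hb φ)) (sqrt_le_sqrt ?_)
    nlinarith [sin_sq_le_one φ, sq_nonneg (sin φ)]
  · refine inv_strictAnti₀ (sqrt_pos.2 (one_sub_sq_mul_sin_sq_pos hb _)) (sqrt_lt_sqrt ?_ ?_)
    · exact (one_sub_sq_mul_sin_sq_pos hb _).le
    · simpa using hab2

lemma pi_div_two_lt_ellipticK {k : ℝ} (hk0 : 0 < k) (hk1 : k < 1) : π / 2 < ellipticK k :=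
  ellipticK_zero ▸ strictMonoOn_ellipticK ⟨le_rfl, one_pos⟩ ⟨hk0.le, hk1⟩ hk0

lemma ellipticK_le {k : ℝ} (hk : k ^ 2 < 1) : ellipticK k ≤ π / 2 / √(1 - k ^ 2) := by
  have hpos : 0 < √(1 - k ^ 2) := sqrt_pos.2 (by linarith)
  calc ellipticK k ≤ ∫ _ in (0)..(π / 2), (√(1 - k ^ 2))⁻¹ := by
        refine intervalIntegral.integral_mono_on (by positivity)
          ((continuous_ellipticK_integrand hk).intervalIntegrable _ _) intervalIntegrable_const
          fun φ _ => inv_anti₀ hpos (sqrt_le_sqrt ?_)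
        nlinarith [sin_sq_le_one φ, sq_nonneg k]
    _ = π / 2 / √(1 - k ^ 2) := by simp [div_eq_mul_inv]

lemma sqrt_one_sub_sq_mul_sin_sq_le {k φ : ℝ} (hk : k ^ 2 ≤ 1) (hφ : φ ∈ Icc 0 (π / 2)) :
    √(1 - k ^ 2 * sin φ ^ 2) ≤ √(1 - k ^ 2) + (π / 2 - φ) := by
  have hcos : 0 ≤ cos φ := cos_nonneg_of_mem_Icc ⟨by linarith [hφ.1, pi_pos], hφ.2⟩
  have hcos_le : cos φ ≤ π / 2 - φ := by
    rw [← sin_pi_div_two_sub]; exact sin_le (by linarith [hφ.2])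
  have hε : 0 ≤ √(1 - k ^ 2) := sqrt_nonneg _
  -- `1 - k² sin² φ = (1 - k²) sin² φ + cos² φ ≤ (√(1 - k²) + cos φ)²`
  refine sqrt_le_iff.2 ⟨by linarith, ?_⟩
  nlinarith [sq_sqrt (sub_nonneg.2 hk), sin_sq_add_cos_sq φ, sin_sq_le_one φ,
    mul_nonneg hε hcos, mul_le_mul_of_nonneg_left (sin_sq_le_one φ) (sub_nonneg.2 hk)]

lemma log_le_ellipticK {k : ℝ} (hk : k ^ 2 < 1) :
    log (1 + π / 2 / √(1 - k ^ 2)) ≤ ellipticK k := by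
  set ε := √(1 - k ^ 2)
  have hε : 0 < ε := sqrt_pos.2 (by linarith)
  have hlog : ∫ φ in (0)..(π / 2), (ε + π / 2 - φ)⁻¹ = log (1 + π / 2 / ε) := by
    rw [intervalIntegral.integral_comp_sub_left (fun x => x⁻¹), sub_zero, add_sub_cancel_right,
      integral_inv_of_pos hε (by positivity)]
    congr 1; field_simp
  rw [← hlog]
  refine intervalIntegral.integral_mono_on (by positivity) ?_
    ((continuous_ellipticK_integrand hk).intervalIntegrable _ _) fun φ hφ => ?_
  · refine ContinuousOn.intervalIntegrable (ContinuousOn.inv₀ (f := fun φ => ε + π / 2 - φ)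
      (by fun_prop) fun φ hφ => ?_)
    rw [uIcc_of_le (by positivity)] at hφ
    linarith [hφ.2]
  · refine inv_anti₀ (sqrt_pos.2 (one_sub_sq_mul_sin_sq_pos hk φ)) ?_
    linarith [sqrt_one_sub_sq_mul_sin_sq_le hk.le hφ]

lemma tendsto_ellipticK_nhdsGT_zero : Tendsto ellipticK (𝓝[>] 0) (𝓝 (π / 2)) := by
  have hsmall : ∀ᶠ k in 𝓝[>] (0 : ℝ), k ∈ Ioo 0 1 := Ioo_mem_nhdsGT one_pos
  have hupper : Tendsto (fun k : ℝ => π / 2 / √(1 - k ^ 2)) (𝓝[>] 0) (𝓝 (π / 2)) := by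
    have : ContinuousAt (fun k : ℝ => π / 2 / √(1 - k ^ 2)) 0 :=
      continuousAt_const.div (by fun_prop) (by simp)
    simpa using this.tendsto.mono_left nhdsWithin_le_nhds
  refine tendsto_of_tendsto_of_tendsto_of_le_of_le' tendsto_const_nhds hupper ?_ ?_
  · filter_upwards [hsmall] with k hk using (pi_div_two_lt_ellipticK hk.1 hk.2).le
  · filter_upwards [hsmall] with k hk using ellipticK_le (by nlinarith [hk.1, hk.2])

lemma tendsto_ellipticK_nhdsLT_one : Tendsto ellipticK (𝓝[<] 1) atTop := by
  have hsmall : ∀ᶠ k in 𝓝[<] (1 : ℝ), k ∈ Ioo 0 1 := Ioo_mem_nhdsLT one_pos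
  have hε : Tendsto (fun k : ℝ => √(1 - k ^ 2)) (𝓝[<] 1) (𝓝[>] 0) := by
    refine tendsto_nhdsWithin_iff.2 ⟨?_, ?_⟩
    · have : ContinuousAt (fun k : ℝ => √(1 - k ^ 2)) 1 := by fun_prop
      simpa using this.tendsto.mono_left nhdsWithin_le_nhds
    · filter_upwards [hsmall] with k hk using sqrt_pos.2 (by nlinarith [hk.1, hk.2])
  have hlower : Tendsto (fun k : ℝ => log (1 + π / 2 / √(1 - k ^ 2))) (𝓝[<] 1) atTop := by
    refine tendsto_log_atTop.comp (tendsto_atTop_add_const_left _ _ ?_)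
    simpa [div_eq_mul_inv] using
      (tendsto_inv_nhdsGT_zero.comp hε).const_mul_atTop (by positivity : 0 < π / 2)
  refine tendsto_atTop_mono' _ ?_ hlower
  filter_upwards [hsmall] with k hk using log_le_ellipticK (by nlinarith [hk.1, hk.2])

/-- Inverse of `k sin φ = (1 - v²) / (1 + v²)`. -/
noncomputable def heightSubst (k φ : ℝ) : ℝ :=
  √((1 - k * sin φ) / (1 + k * sin φ))

lemma heightSubst_zero (k : ℝ) : heightSubst k 0 = 1 := by
  simp [heightSubst]

lemma heightSubst_pi_div_two (k : ℝ) : heightSubst k (π / 2) = √((1 - k) / (1 + k)) := by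
  simp [heightSubst]

lemma continuous_heightSubst {k : ℝ} (hk : |k| < 1) : Continuous (heightSubst k) := by
  refine continuous_sqrt.comp ((by fun_prop : Continuous fun φ => 1 - k * sin φ).div
    (by fun_prop) fun φ => ?_)
  have : |k * sin φ| < 1 := by
    rw [abs_mul]; exact (mul_le_of_le_one_right (abs_nonneg k) (abs_sin_le_one φ)).trans_lt hk
  linarith [neg_abs_le (k * sin φ)]

lemma strictAntiOn_heightSubst {k : ℝ} (hk0 : 0 < k) (hk1 : k ≤ 1) :
    StrictAntiOn (heightSubst k) (Icc 0 (π / 2)) := by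
  intro x hx y hy hxy
  have hsin : sin x < sin y := strictMonoOn_sin ⟨by linarith [hx.1, pi_pos], hx.2⟩
    ⟨by linarith [hy.1, pi_pos], hy.2⟩ hxy
  have hsx : 0 ≤ sin x := sin_nonneg_of_nonneg_of_le_pi hx.1 (by linarith [hx.2, pi_pos])
  have hsy : sin y ≤ 1 := sin_le_one y
  refine sqrt_lt_sqrt (div_nonneg (by nlinarith) (by nlinarith)) ?_
  rw [div_lt_div_iff₀ (by nlinarith) (by nlinarith)]
  nlinarith

lemma heightSubst_image {k : ℝ} (hk0 : 0 < k) (hk1 : k < 1) :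
    heightSubst k '' Ioo 0 (π / 2) = Ioo (√((1 - k) / (1 + k))) 1 := by
  have hanti := strictAntiOn_heightSubst hk0 hk1.le
  have hπ : (0 : ℝ) ≤ π / 2 := by positivity
  refine Subset.antisymm ?_ ?_
  · rintro _ ⟨φ, hφ, rfl⟩
    have h : heightSubst k φ ∈ Ioo (heightSubst k (π / 2)) (heightSubst k 0) :=
      ⟨hanti (Ioo_subset_Icc_self hφ) ⟨hπ, le_rfl⟩ hφ.2,
        hanti ⟨le_rfl, hπ⟩ (Ioo_subset_Icc_self hφ) hφ.1⟩
    rwa [heightSubst_zero, heightSubst_pi_div_two] at h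
  · have := intermediate_value_Ioo' hπ
      (continuous_heightSubst (abs_lt.2 ⟨by linarith, hk1⟩)).continuousOn
    rwa [heightSubst_zero, heightSubst_pi_div_two] at this

lemma hasDerivAt_heightSubst {k φ : ℝ} (hminus : 0 < 1 - k * sin φ) (hplus : 0 < 1 + k * sin φ) :
    HasDerivAt (heightSubst k) (-(k * cos φ) / ((1 + k * sin φ) ^ 2 * heightSubst k φ)) φ := by
  have hquot : HasDerivAt (fun t => (1 - k * sin t) / (1 + k * sin t))
      ((-(k * cos φ) * (1 + k * sin φ) - (1 - k * sin φ) * (k * cos φ)) /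
        (1 + k * sin φ) ^ 2) φ :=
    (((hasDerivAt_sin φ).const_mul k).const_sub 1).div
      (((hasDerivAt_sin φ).const_mul k).const_add 1) hplus.ne'
  refine (hquot.sqrt (div_pos hminus hplus).ne').congr_deriv ?_
  change _ / (2 * heightSubst k φ) = _
  have hv : 0 < heightSubst k φ := sqrt_pos.2 (div_pos hminus hplus)
  field_simp
  ring

lemma mul_sin_mem_Ioo {k φ : ℝ} (hk0 : 0 < k) (hk1 : k < 1) (hφ : φ ∈ Ioo 0 (π / 2)) :
    k * sin φ ∈ Ioo 0 1 :=
  ⟨mul_pos hk0 (sin_pos_of_pos_of_lt_pi hφ.1 (by linarith [hφ.2, pi_pos])),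
    by nlinarith [sin_le_one φ]⟩

lemma abs_deriv_heightSubst_mul {k φ : ℝ} (hk0 : 0 < k) (hk1 : k < 1) (hφ : φ ∈ Ioo 0 (π / 2)) :
    |-(k * cos φ) / ((1 + k * sin φ) ^ 2 * heightSubst k φ)| •
        (2 / √(k ^ 2 * (1 + heightSubst k φ ^ 2) ^ 2 - (1 - heightSubst k φ ^ 2) ^ 2)) =
      (√(1 - k ^ 2 * sin φ ^ 2))⁻¹ := by
  obtain ⟨ht0, ht1⟩ := mul_sin_mem_Ioo hk0 hk1 hφ
  have hc : 0 < cos φ := cos_pos_of_mem_Ioo ⟨by linarith [hφ.1, pi_pos], hφ.2⟩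
  have hv : 0 < heightSubst k φ := sqrt_pos.2 (div_pos (by linarith) (by linarith))
  have hv2 : heightSubst k φ ^ 2 = (1 - k * sin φ) / (1 + k * sin φ) :=
    sq_sqrt (div_pos (by linarith) (by linarith)).le
  have hradicand : √(k ^ 2 * (1 + heightSubst k φ ^ 2) ^ 2 - (1 - heightSubst k φ ^ 2) ^ 2) =
      2 * k * cos φ / (1 + k * sin φ) := by
    have : k ^ 2 * (1 + heightSubst k φ ^ 2) ^ 2 - (1 - heightSubst k φ ^ 2) ^ 2 =
        (2 * k * cos φ / (1 + k * sin φ)) ^ 2 := by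
      rw [hv2]
      field_simp
      linear_combination (-4 * k ^ 2) * sin_sq_add_cos_sq φ
    rw [this, sqrt_sq (by positivity)]
  have hsqrt : √(1 - k ^ 2 * sin φ ^ 2) = (1 + k * sin φ) * heightSubst k φ := by
    rw [sqrt_eq_iff_eq_sq (by nlinarith) (by positivity), mul_pow, hv2]
    field_simp
    ring
  rw [hradicand, hsqrt, neg_div, abs_neg, abs_of_pos (by positivity), smul_eq_mul]
  field_simp

lemma hasDerivWithinAt_heightSubst {k φ : ℝ} (hk0 : 0 < k) (hk1 : k < 1)
    (hφ : φ ∈ Ioo 0 (π / 2)) :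
    HasDerivWithinAt (heightSubst k) (-(k * cos φ) / ((1 + k * sin φ) ^ 2 * heightSubst k φ))
      (Ioo 0 (π / 2)) φ := by
  obtain ⟨ht0, ht1⟩ := mul_sin_mem_Ioo hk0 hk1 hφ
  exact (hasDerivAt_heightSubst (by linarith) (by linarith)).hasDerivWithinAt

lemma integrableOn_halfHeight_integrand {k : ℝ} (hk0 : 0 < k) (hk1 : k < 1) :
    IntegrableOn (fun v => 2 / √(k ^ 2 * (1 + v ^ 2) ^ 2 - (1 - v ^ 2) ^ 2))
      (Ioo (√((1 - k) / (1 + k))) 1) := by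
  rw [← heightSubst_image hk0 hk1, integrableOn_image_iff_integrableOn_abs_deriv_smul
    measurableSet_Ioo (fun φ hφ => hasDerivWithinAt_heightSubst hk0 hk1 hφ)
    ((strictAntiOn_heightSubst hk0 hk1.le).injOn.mono Ioo_subset_Icc_self)]
  refine IntegrableOn.congr_fun ?_ (fun φ hφ => (abs_deriv_heightSubst_mul hk0 hk1 hφ).symm)
    measurableSet_Ioo
  exact (continuous_ellipticK_integrand (by nlinarith)).integrableOn_Icc.mono_set
    Ioo_subset_Icc_self

lemma setIntegral_halfHeight_eq_ellipticK {k : ℝ} (hk0 : 0 < k) (hk1 : k < 1) :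
    ∫ v in Ioo (√((1 - k) / (1 + k))) 1, 2 / √(k ^ 2 * (1 + v ^ 2) ^ 2 - (1 - v ^ 2) ^ 2) =
      ellipticK k := by
  rw [← heightSubst_image hk0 hk1, integral_image_eq_integral_abs_deriv_smul
    measurableSet_Ioo (fun φ hφ => hasDerivWithinAt_heightSubst hk0 hk1 hφ)
    ((strictAntiOn_heightSubst hk0 hk1.le).injOn.mono Ioo_subset_Icc_self),
    setIntegral_congr_fun measurableSet_Ioo (fun φ hφ => abs_deriv_heightSubst_mul hk0 hk1 hφ),
    ellipticK, intervalIntegral.integral_of_le (by positivity), integral_Ioc_eq_integral_Ioo]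

lemma halfHeight_radicand_pos {k v : ℝ} (hk : 0 < 1 + k)
    (hv : v ∈ Ioo (√((1 - k) / (1 + k))) 1) :
    0 < k ^ 2 * (1 + v ^ 2) ^ 2 - (1 - v ^ 2) ^ 2 := by
  have hv0 : 0 < v := (sqrt_nonneg _).trans_lt hv.1
  have hv2 : (1 - k) / (1 + k) < v ^ 2 := (sqrt_lt' hv0).1 hv.1
  rw [div_lt_iff₀ hk] at hv2
  have h1 : 0 < 1 - v ^ 2 := by nlinarith [hv.2]
  have hminus : 0 < k * (1 + v ^ 2) - (1 - v ^ 2) := by linarith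
  have hplus : 0 < k * (1 + v ^ 2) + (1 - v ^ 2) := by nlinarith
  nlinarith [mul_pos hminus hplus]

end TallRectangle

open TallRectangle

/-- Properties of the half-height `Λ(d) = ∫_{d₁}^{1} 2/√(d²(1+v²)² - (1-v²)²) dv`
(with `d₁ = √((1-d)/(1+d))`) of the tall rectangle `Σ_d`: the expression under the root
is positive on `(d₁,1)`, the integral converges, `Λ(d) > π/2`, `Λ` is strictly
increasing on `(0,1)`, `Λ(d) → π/2` as `d → 0⁺`, and `Λ(d) → ∞` as `d → 1⁻`. -/
theorem tall_rectangle_height_properties (Λ : ℝ → ℝ)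
    (hΛ : ∀ d : ℝ, Λ d = ∫ v in Set.Ioo (Real.sqrt ((1 - d) / (1 + d))) 1,
        2 / Real.sqrt (d ^ 2 * (1 + v ^ 2) ^ 2 - (1 - v ^ 2) ^ 2)) :
    (∀ d ∈ Set.Ioo (0 : ℝ) 1,
      (∀ v ∈ Set.Ioo (Real.sqrt ((1 - d) / (1 + d))) 1,
        0 < d ^ 2 * (1 + v ^ 2) ^ 2 - (1 - v ^ 2) ^ 2) ∧
      IntegrableOn (fun v => 2 / Real.sqrt (d ^ 2 * (1 + v ^ 2) ^ 2 - (1 - v ^ 2) ^ 2))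
        (Set.Ioo (Real.sqrt ((1 - d) / (1 + d))) 1) ∧
      Real.pi / 2 < Λ d) ∧
    StrictMonoOn Λ (Set.Ioo 0 1) ∧
    Tendsto Λ (nhdsWithin 0 (Set.Ioi 0)) (nhds (Real.pi / 2)) ∧
    Tendsto Λ (nhdsWithin 1 (Set.Iio 1)) atTop := by
  have hΛK : Set.EqOn ellipticK Λ (Set.Ioo 0 1) := fun d hd =>
    ((hΛ d).trans (setIntegral_halfHeight_eq_ellipticK hd.1 hd.2)).symm
  refine ⟨fun d hd => ⟨fun v hv => halfHeight_radicand_pos (by linarith [hd.1]) hv,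
      integrableOn_halfHeight_integrand hd.1 hd.2,
      hΛK hd ▸ pi_div_two_lt_ellipticK hd.1 hd.2⟩, ?_, ?_, ?_⟩
  · exact (strictMonoOn_ellipticK.mono Set.Ioo_subset_Ico_self).congr hΛK
  · exact tendsto_ellipticK_nhdsGT_zero.congr' (eventually_of_mem (Ioo_mem_nhdsGT one_pos) hΛK)
  · exact tendsto_ellipticK_nhdsLT_one.congr' (eventually_of_mem (Ioo_mem_nhdsLT one_pos) hΛK)
end

section
/- The functions w₁(x,t) = (1/4)(t·sin t − x²·cos t) and w₂(x,t) = (1/8)((π − 2t)·cos t − 2x²·sin t) satisfy the Jacobi equation ∂²w/∂x² + ∂²w/∂t² + w = 0 at every point (x,t) ∈ ℝ²; equivalently, L w₁ = L w₂ = 0 for the Jacobi operator L = −sin²t(∂²/∂x² + ∂²/∂t² + 1) of the parabolic catenoid. -/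
/-! Both fields lie in the family `(αt + β + γx²) sin t + (γt + δ - αx²) cos t`. Since `sin` and
`cos` solve `f'' + f = 0`, a function `(at + b) sin t + (ct + d) cos t` has
`f'' + f = 2a cos t - 2c sin t`, coming only from the slopes of its coefficients; in the family,
`∂x²` of the `x²` terms gives `2γ sin t - 2α cos t`, which cancels this exactly. -/

section

open Real

noncomputable def trigAffine (α β γ δ : ℝ) (s : ℝ) : ℝ := (α * s + β) * sin s + (γ * s + δ) * cos s

theorem hasDerivAt_trigAffine (α β γ δ s : ℝ) :
    HasDerivAt (trigAffine α β γ δ) (trigAffine (-γ) (α - δ) α (β + γ) s) s := by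
  have hsin : HasDerivAt (fun s => (α * s + β) * sin s) (α * sin s + (α * s + β) * cos s) s :=
    ((((hasDerivAt_id' s).const_mul α).add_const β).mul (hasDerivAt_sin s)).congr_deriv
      (by ring)
  have hcos : HasDerivAt (fun s => (γ * s + δ) * cos s) (γ * cos s - (γ * s + δ) * sin s) s :=
    ((((hasDerivAt_id' s).const_mul γ).add_const δ).mul (hasDerivAt_cos s)).congr_deriv
      (by ring)
  refine (hsin.add hcos).congr_deriv ?_
  simp only [trigAffine]
  ring

theorem deriv_trigAffine (α β γ δ : ℝ) :
    deriv (trigAffine α β γ δ) = trigAffine (-γ) (α - δ) α (β + γ) :=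
  funext fun s => (hasDerivAt_trigAffine α β γ δ s).deriv

theorem deriv_deriv_trigAffine_add_self (α β γ δ t : ℝ) :
    deriv (deriv (trigAffine α β γ δ)) t + trigAffine α β γ δ t
      = 2 * (α * cos t - γ * sin t) := by
  rw [deriv_trigAffine, deriv_trigAffine]
  simp only [trigAffine]
  ring

theorem deriv_deriv_const_add_mul_sq (c d x : ℝ) :
    deriv (fun a => deriv (fun b => c + d * b ^ 2) a) x = 2 * d := by
  have h₁ : ∀ a : ℝ, HasDerivAt (fun b => c + d * b ^ 2) (2 * d * a) a := fun a =>
    (((hasDerivAt_pow 2 a).const_mul d).const_add c).congr_deriv (by push_cast; ring)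
  simp only [fun a => (h₁ a).deriv]
  simp

def IsJacobiField (u : ℝ → ℝ → ℝ) : Prop :=
  ∀ x t, deriv (fun a => deriv (fun b => u b t) a) x
    + deriv (fun a => deriv (fun b => u x b) a) t + u x t = 0

noncomputable def jacobiField (α β γ δ : ℝ) (x t : ℝ) : ℝ :=
  trigAffine α (β + γ * x ^ 2) γ (δ - α * x ^ 2) t

theorem isJacobiField_jacobiField (α β γ δ : ℝ) : IsJacobiField (jacobiField α β γ δ) := by
  intro x t
  have hx : (fun b => jacobiField α β γ δ b t)
      = fun b => trigAffine α β γ δ t + (γ * sin t - α * cos t) * b ^ 2 := by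
    funext b
    simp only [jacobiField, trigAffine]
    ring
  have ht := deriv_deriv_trigAffine_add_self α (β + γ * x ^ 2) γ (δ - α * x ^ 2) t
  rw [hx, deriv_deriv_const_add_mul_sq]
  simp only [jacobiField]
  linear_combination ht

end

/-- The functions `w₁(x,t) = (1/4)(t sin t - x² cos t)` and
`w₂(x,t) = (1/8)((π - 2t) cos t - 2x² sin t)` satisfy the Jacobi equation
`w_{xx} + w_{tt} + w = 0` at every point of `ℝ²`; equivalently `L w₁ = L w₂ = 0` for
the Jacobi operator `L = -sin²t (∂x² + ∂t² + 1)` of the parabolic catenoid. -/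
theorem jacobi_fields_of_parabolic_catenoid (w₁ w₂ : ℝ → ℝ → ℝ)
    (hw₁ : ∀ x t : ℝ, w₁ x t = (1 / 4) * (t * Real.sin t - x ^ 2 * Real.cos t))
    (hw₂ : ∀ x t : ℝ,
      w₂ x t = (1 / 8) * ((Real.pi - 2 * t) * Real.cos t - 2 * x ^ 2 * Real.sin t)) :
    ∀ x t : ℝ,
      (deriv (fun a => deriv (fun b => w₁ b t) a) x
        + deriv (fun a => deriv (fun b => w₁ x b) a) t + w₁ x t = 0) ∧
      (deriv (fun a => deriv (fun b => w₂ b t) a) x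
        + deriv (fun a => deriv (fun b => w₂ x b) a) t + w₂ x t = 0) ∧
      (-(Real.sin t) ^ 2 * (deriv (fun a => deriv (fun b => w₁ b t) a) x
        + deriv (fun a => deriv (fun b => w₁ x b) a) t + w₁ x t) = 0) ∧
      (-(Real.sin t) ^ 2 * (deriv (fun a => deriv (fun b => w₂ b t) a) x
        + deriv (fun a => deriv (fun b => w₂ x b) a) t + w₂ x t) = 0) := by
  have e₁ : w₁ = jacobiField (1 / 4) 0 0 0 := by
    funext x t
    rw [hw₁]
    simp only [jacobiField, trigAffine]
    ring
  have e₂ : w₂ = jacobiField 0 0 (-1 / 4) (Real.pi / 8) := by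
    funext x t
    rw [hw₂]
    simp only [jacobiField, trigAffine]
    ring
  have h₁ : IsJacobiField w₁ := e₁ ▸ isJacobiField_jacobiField _ _ _ _
  have h₂ : IsJacobiField w₂ := e₂ ▸ isJacobiField_jacobiField _ _ _ _
  exact fun x t =>
    ⟨h₁ x t, h₂ x t, mul_eq_zero_of_right _ (h₁ x t), mul_eq_zero_of_right _ (h₂ x t)⟩
end

section
/- For every y ∈ (−1,1), ∫₀¹ (−s²y³ + 3s²y² − 3s²y + s² − 3sy² + 6sy − 3s + y² − 2y + 1) / (2(sy − s + 2)·√(s(1−y)(sy − s + 2))) ds = 0. -/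
/-!
With `u = 1 - y ∈ (0, 2)` the integrand is `u² (u s² - 3 s + 1) / (2 (2 - u s) √(u s (2 - u s)))`,
and it has the explicit primitive `u (1 - s) √(u s) / (2 √(2 - u s))`, which vanishes at both
`s = 0` and `s = 1`. The integrand is integrable because it is `1 / √s` times a function continuous
on `[0, 1]`.
-/

open Set MeasureTheory intervalIntegral

theorem intervalIntegrable_div_sqrt {f : ℝ → ℝ} {b : ℝ} (hb : 0 ≤ b)
    (hf : ContinuousOn f (Icc 0 b)) : IntervalIntegrable (fun s => f s / √s) volume 0 b := by
  have hrpow : IntervalIntegrable (fun s : ℝ => s ^ (-(1 / 2) : ℝ)) volume 0 b :=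
    intervalIntegrable_rpow' (by norm_num)
  refine (hrpow.mul_continuousOn (by rwa [uIcc_of_le hb])).congr fun s hs => ?_
  rw [uIoc_of_le hb] at hs
  rw [Real.rpow_neg hs.1.le, ← Real.sqrt_eq_rpow, div_eq_inv_mul]

namespace Catenoid

noncomputable def a1 (y s : ℝ) : ℝ :=
  (-s ^ 2 * y ^ 3 + 3 * s ^ 2 * y ^ 2 - 3 * s ^ 2 * y + s ^ 2
    - 3 * s * y ^ 2 + 6 * s * y - 3 * s + y ^ 2 - 2 * y + 1)
    / (2 * (s * y - s + 2) * √(s * (1 - y) * (s * y - s + 2)))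

noncomputable def a1Primitive (y s : ℝ) : ℝ :=
  (1 - y) * (1 - s) * √(s * (1 - y)) / (2 * √(s * y - s + 2))

theorem mul_sub_add_two_pos {y s : ℝ} (hy : -1 < y) (hs : s ∈ Icc (0 : ℝ) 1) :
    0 < s * y - s + 2 := by
  obtain ⟨hs0, hs1⟩ := hs
  rcases le_or_gt y 1 with hy1 | hy1
  · nlinarith [mul_nonneg hs0 (by linarith : 0 ≤ 1 - y)]
  · nlinarith [mul_nonneg hs0 (by linarith : 0 ≤ y - 1)]

theorem continuousOn_a1Primitive {y : ℝ} (hy : -1 < y) : ContinuousOn (a1Primitive y) (Icc 0 1) :=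
  ContinuousOn.div (by fun_prop) (by fun_prop) fun s hs => by
    have := mul_sub_add_two_pos hy hs
    positivity

theorem hasDerivAt_a1Primitive {y s : ℝ} (hA : 0 < s * (1 - y)) (hD : 0 < s * y - s + 2) :
    HasDerivAt (a1Primitive y) (a1 y s) s := by
  have hu := ((hasDerivAt_id' s).mul_const (1 - y)).sqrt hA.ne'
  have hv := ((((hasDerivAt_id' s).mul_const y).sub (hasDerivAt_id' s)).add_const 2).sqrt hD.ne'
  have h := ((((hasDerivAt_const s (1 : ℝ)).sub (hasDerivAt_id' s)).const_mul (1 - y)).mul hu).div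
    (hv.const_mul 2) (by positivity)
  refine h.congr_deriv ?_
  simp only [Pi.sub_apply, Pi.mul_apply, one_mul]
  rw [a1, Real.sqrt_mul hA.le]
  have ha2 := Real.sq_sqrt hA.le
  have hb2 := Real.sq_sqrt hD.le
  have ha := Real.sqrt_pos.2 hA
  have hb := Real.sqrt_pos.2 hD
  set a := √(s * (1 - y))
  set b := √(s * y - s + 2)
  rw [← hb2]
  field_simp
  linear_combination (1 - y) * ((1 - s) * (1 - y) - 2 * (s * y - s + 2)) * ha2
    + (1 - y) * ((1 - s) * (1 - y) - 2 * a ^ 2) * hb2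

theorem intervalIntegrable_a1 {y : ℝ} (hy : y ∈ Ioo (-1 : ℝ) 1) :
    IntervalIntegrable (a1 y) volume 0 1 := by
  have hu : 0 < 1 - y := by linarith [hy.2]
  have hf : ContinuousOn (fun s => (1 - y) ^ 2 * ((1 - y) * s ^ 2 - 3 * s + 1)
      / (2 * (s * y - s + 2) * √((1 - y) * (s * y - s + 2)))) (Icc 0 1) :=
    ContinuousOn.div (by fun_prop) (by fun_prop) fun s hs => by
      have := mul_sub_add_two_pos hy.1 hs
      positivity
  refine (intervalIntegrable_div_sqrt zero_le_one hf).congr fun s hs => ?_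
  rw [uIoc_of_le zero_le_one] at hs
  rw [a1, mul_assoc s, Real.sqrt_mul hs.1.le, div_div]
  ring

end Catenoid

open Catenoid in
/-- For `y ∈ (-1,1)`, the coefficient `a₁` of `√κ` in the catenoid height expansion
integrates to zero over `s ∈ [0,1]`. -/
theorem integral_a1_eq_zero :
    ∀ y ∈ Set.Ioo (-1 : ℝ) 1,
      (∫ s in (0 : ℝ)..1,
        (-s ^ 2 * y ^ 3 + 3 * s ^ 2 * y ^ 2 - 3 * s ^ 2 * y + s ^ 2
          - 3 * s * y ^ 2 + 6 * s * y - 3 * s + y ^ 2 - 2 * y + 1)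
        / (2 * (s * y - s + 2) * Real.sqrt (s * (1 - y) * (s * y - s + 2)))) = 0 := by
  intro y hy
  have hderiv : ∀ s ∈ Ioo (0 : ℝ) 1, HasDerivAt (a1Primitive y) (a1 y s) s := fun s hs =>
    hasDerivAt_a1Primitive (mul_pos hs.1 (by linarith [hy.2]))
      (mul_sub_add_two_pos hy.1 (Ioo_subset_Icc_self hs))
  change ∫ s in (0 : ℝ)..1, a1 y s = 0
  rw [integral_eq_sub_of_hasDerivAt_of_le zero_le_one (continuousOn_a1Primitive hy.1) hderiv
    (intervalIntegrable_a1 hy)]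
  simp [a1Primitive]
end

section
/- For every x ∈ ℝ and y ∈ (0,1), ∫₀¹ [−2s⁴(y−1)⁵ + 2s³(y−5)(y−1)⁴ + s²(10y−13)(y−1)³ + 2s(y−1)(y(x² + 8y − 6) − 2) + y(4x² + (5−3y)y + 7) − 9] / (8(sy − s + 2)²·√(s(1−y)(sy − s + 2))) ds = (1/4)·( x²y/√(1−y²) − arccos y ). -/
open Real Set intervalIntegral MeasureTheory

/-!
With `u = s (1 - y)`, the integrand is the derivative on `(0, 1)` of
`F(s) = √(u (2 - u)) · P(s) / (8 (1 - y) (2 - u)²) - arcsin (u - 1) / 4`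
for an explicit cubic `P`. Because `1 - (u - 1)² = u (2 - u)`, both terms of `F'` carry the
same factor `1 / √(u (2 - u))`, and `F' = a₂` becomes a polynomial identity. The integrand is
`s^(-1/2)` times a function continuous on `[0, 1]`, hence integrable, and `F` is continuous on
`[0, 1]`, so the integral is `F 1 - F 0 = x² y / (4 √(1 - y²)) + (arcsin y - π / 2) / 4`.
-/

theorem HasDerivAt.sqrt_mul {g R : ℝ → ℝ} {g' R' s : ℝ} (hg : HasDerivAt g g' s)
    (hpos : 0 < g s) (hR : HasDerivAt R R' s) :
    HasDerivAt (fun t => √(g t) * R t) ((g' * R s / 2 + g s * R') / √(g s)) s := by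
  refine ((hg.sqrt hpos.ne').mul hR).congr_deriv ?_
  have hne := (sqrt_pos.2 hpos).ne'
  field_simp
  rw [sq_sqrt hpos.le]
  ring

theorem intervalIntegrable_inv_sqrt_mul {h : ℝ → ℝ} {b : ℝ} (hb : 0 ≤ b)
    (hh : ContinuousOn h (Icc 0 b)) :
    IntervalIntegrable (fun s => (√s)⁻¹ * h s) volume 0 b := by
  refine IntervalIntegrable.mul_continuousOn ?_ (by rwa [uIcc_of_le hb])
  refine (intervalIntegrable_rpow' (show (-1 : ℝ) < -(1 / 2) by norm_num)).congr_uIoo ?_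
  intro s hs
  rw [uIoo_of_le hb] at hs
  simp only [rpow_neg hs.1.le, sqrt_eq_rpow]

noncomputable section

def a2Numerator (x y s : ℝ) : ℝ :=
  -2 * s ^ 4 * (y - 1) ^ 5 + 2 * s ^ 3 * (y - 5) * (y - 1) ^ 4
    + s ^ 2 * (10 * y - 13) * (y - 1) ^ 3
    + 2 * s * (y - 1) * (y * (x ^ 2 + 8 * y - 6) - 2)
    + y * (4 * x ^ 2 + (5 - 3 * y) * y + 7) - 9

def a2 (x y s : ℝ) : ℝ :=
  a2Numerator x y s / (8 * (s * y - s + 2) ^ 2 * √(s * (1 - y) * (s * y - s + 2)))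

def a2Primitive (x y s : ℝ) : ℝ :=
  √(s * (1 - y) * (2 - s * (1 - y))) *
      ((2 * x ^ 2 * y * (2 - s * (1 - y)) + (1 - y) * (1 - y - s * (1 - y)) *
          ((s * (1 - y)) ^ 2 - (2 - y) * (s * (1 - y)) - (3 * y + 1)))
        / (8 * (1 - y) * (2 - s * (1 - y)) ^ 2))
    - arcsin (s * (1 - y) - 1) / 4

end

theorem hasDerivAt_a2Primitive (x : ℝ) {y s : ℝ} (hu : s * (1 - y) ∈ Ioo 0 2) :
    HasDerivAt (a2Primitive x y) (a2 x y s) s := by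
  obtain ⟨hu0, hu2⟩ := hu
  have hq : 1 - y ≠ 0 := by rintro h; simp [h] at hu0
  have hD : 2 - s * (1 - y) ≠ 0 := by linarith
  have hg : 0 < s * (1 - y) * (2 - s * (1 - y)) := mul_pos hu0 (by linarith)
  have hu := (hasDerivAt_id' s).mul_const (1 - y)
  have hP := ((hu.const_sub 2).const_mul (2 * x ^ 2 * y)).add
    (((hu.const_sub (1 - y)).const_mul (1 - y)).mul
      (((hu.pow 2).sub (hu.const_mul (2 - y))).sub_const (3 * y + 1)))
  have hden := ((hu.const_sub 2).pow 2).const_mul (8 * (1 - y))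
  have hasin := ((hasDerivAt_arcsin (by linarith) (by linarith)).comp s
    (hu.sub_const 1)).div_const 4
  have hF := ((hu.mul (hu.const_sub 2)).sqrt_mul hg (hP.div hden (by simp [hq, hD]))).sub hasin
  rw [show 1 - (s * (1 - y) - 1) ^ 2 = s * (1 - y) * (2 - s * (1 - y)) by ring] at hF
  unfold a2Primitive
  refine hF.congr_deriv ?_
  rw [a2, a2Numerator, show s * y - s + 2 = 2 - s * (1 - y) by ring]
  simp only [Pi.add_apply, Pi.mul_apply, Pi.sub_apply, Pi.pow_apply, Pi.div_apply, Nat.cast_ofNat,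
    Nat.add_one_sub_one, pow_one]
  have hS := (sqrt_pos.2 hg).ne'
  -- `field_simp` should clear exactly these two denominators, kept atomic
  generalize √(s * (1 - y) * (2 - s * (1 - y))) = S at hS ⊢
  generalize hDdef : 2 - s * (1 - y) = D at hD ⊢
  field_simp
  subst hDdef
  ring

theorem continuousOn_a2Primitive (x : ℝ) {y : ℝ} (hy : y ∈ Ioo (-1) 1) :
    ContinuousOn (a2Primitive x y) (Icc 0 1) := by
  have hden : ∀ s ∈ Icc (0 : ℝ) 1, 8 * (1 - y) * (2 - s * (1 - y)) ^ 2 ≠ 0 := by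
    rintro s ⟨hs0, hs1⟩
    have : 0 < 2 - s * (1 - y) := by nlinarith [hy.1, hy.2]
    have : 0 < 1 - y := by linarith [hy.2]
    positivity
  unfold a2Primitive
  exact ((by fun_prop : Continuous _).continuousOn.mul
    ((by fun_prop : Continuous _).continuousOn.div (by fun_prop) hden)).sub (by fun_prop)

theorem a2Primitive_zero (x y : ℝ) : a2Primitive x y 0 = π / 8 := by
  simp only [a2Primitive, zero_mul, sqrt_zero, zero_sub, arcsin_neg, arcsin_one]
  ring

theorem a2Primitive_one (x : ℝ) {y : ℝ} (hy : y ∈ Ioo (-1) 1) :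
    a2Primitive x y 1 = x ^ 2 * y / (4 * √(1 - y ^ 2)) + arcsin y / 4 := by
  obtain ⟨hy0, hy1⟩ := hy
  have hpos : 0 < 1 - y ^ 2 := by nlinarith
  have hS := (sqrt_pos.2 hpos).ne'
  rw [a2Primitive, show 1 * (1 - y) * (2 - 1 * (1 - y)) = 1 - y ^ 2 by ring,
    show 1 * (1 - y) - 1 = -y by ring, arcsin_neg, show 1 - y - 1 * (1 - y) = 0 by ring,
    show 2 - 1 * (1 - y) = 1 + y by ring]
  have h1 : 1 - y ≠ 0 := by linarith
  have h2 : 1 + y ≠ 0 := by linarith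
  field_simp
  linear_combination 8 * x ^ 2 * y * (1 + y) * sq_sqrt hpos.le

theorem intervalIntegrable_a2 (x : ℝ) {y : ℝ} (hy : y ∈ Ioo (-1) 1) :
    IntervalIntegrable (a2 x y) volume 0 1 := by
  have hD : ∀ s ∈ Icc (0 : ℝ) 1, 0 < s * y - s + 2 := by
    rintro s ⟨hs0, hs1⟩
    nlinarith [hy.1, hy.2]
  refine (intervalIntegrable_inv_sqrt_mul zero_le_one
    (h := fun s => a2Numerator x y s / (8 * (s * y - s + 2) ^ 2 * √((1 - y) * (s * y - s + 2))))
    ?_).congr_uIoo ?_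
  · refine ContinuousOn.div (by unfold a2Numerator; fun_prop) (by fun_prop) fun s hs => ?_
    have := hD s hs
    have : 0 < 1 - y := by linarith [hy.2]
    positivity
  · intro s hs
    rw [uIoo_of_le zero_le_one] at hs
    rw [a2, show s * (1 - y) * (s * y - s + 2) = s * ((1 - y) * (s * y - s + 2)) by ring,
      sqrt_mul hs.1.le]
    simp only [div_eq_mul_inv, mul_inv]
    ring

/-- For `x ∈ ℝ` and `y ∈ (0,1)`, the coefficient `a₂` of `κ` in the catenoid height
expansion integrates over `s ∈ [0,1]` to `(1/4)(x²y/√(1-y²) - arccos y)`. -/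
theorem integral_a2 :
    ∀ x : ℝ, ∀ y ∈ Set.Ioo (0 : ℝ) 1,
      (∫ s in (0 : ℝ)..1,
        (-2 * s ^ 4 * (y - 1) ^ 5 + 2 * s ^ 3 * (y - 5) * (y - 1) ^ 4
          + s ^ 2 * (10 * y - 13) * (y - 1) ^ 3
          + 2 * s * (y - 1) * (y * (x ^ 2 + 8 * y - 6) - 2)
          + y * (4 * x ^ 2 + (5 - 3 * y) * y + 7) - 9)
        / (8 * (s * y - s + 2) ^ 2 * Real.sqrt (s * (1 - y) * (s * y - s + 2))))
      = (1 / 4) * (x ^ 2 * y / Real.sqrt (1 - y ^ 2) - Real.arccos y) := by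
  rintro x y ⟨hy0, hy1⟩
  have hy : y ∈ Ioo (-1) 1 := ⟨by linarith, hy1⟩
  have hderiv : ∀ s ∈ Ioo (0 : ℝ) 1, HasDerivAt (a2Primitive x y) (a2 x y s) s :=
    fun s ⟨hs0, hs1⟩ => hasDerivAt_a2Primitive x ⟨by nlinarith, by nlinarith⟩
  change ∫ s in (0 : ℝ)..1, a2 x y s = _
  rw [integral_eq_sub_of_hasDerivAt_of_le zero_le_one (continuousOn_a2Primitive x hy) hderiv
    (intervalIntegrable_a2 x hy), a2Primitive_one x hy, a2Primitive_zero, arccos]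
  ring
end

section
/- For every x ∈ ℝ and y ∈ (0,1), ∫₀¹ [−2s⁴(y−1)⁵ + 2s³(y−5)(y−1)⁴ + s²(10y−17)(y−1)³ + 2s(y−1)(−(x²+14)y + 8y² + 6) − y(4x² + y(3y−5) + 9) + 7] / (8(s(y−1) + 2)²·√(s(1−y)(s(y−1) + 2))) ds = (1/4)·( arccos y − x²y/√(1−y²) ). In particular this integral is the negative of ∫₀¹ a₂(x,y,s) ds = (1/4)(x²y/√(1−y²) − arccos y), so the Jacobi field on the parabolic catenoid generated by deformation into tall rectangles is the negative of the one generated by deformation into catenoids. -/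
/-!
Substituting `u = 1 - s(1 - y)` turns `s(1 - y)(s(y - 1) + 2)` into `1 - u²` and `s(y - 1) + 2`
into `1 + u`, which suggests the primitive `arccos u / 4 + P(s) √(1 - u²) / (1 + u)²` with `P`
cubic; matching derivatives determines `P`. It vanishes at `s = 0`, and at `s = 1` (where
`u = y`) it equals `(arccos y - x²y/√(1 - y²)) / 4`. The integrand is `O(s^(-1/2))` at `s = 0`,
so it is integrable and the fundamental theorem of calculus applies.
-/

open Real Set intervalIntegral MeasureTheory

noncomputable section

namespace ParabolicCatenoid

def h2Num (x y s : ℝ) : ℝ :=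
  -2 * s ^ 4 * (y - 1) ^ 5 + 2 * s ^ 3 * (y - 5) * (y - 1) ^ 4
    + s ^ 2 * (10 * y - 17) * (y - 1) ^ 3
    + 2 * s * (y - 1) * (-(x ^ 2 + 14) * y + 8 * y ^ 2 + 6)
    - y * (4 * x ^ 2 + y * (3 * y - 5) + 9) + 7

def h2 (x y s : ℝ) : ℝ :=
  h2Num x y s / (8 * (s * (y - 1) + 2) ^ 2 * √(s * (1 - y) * (s * (y - 1) + 2)))

def h2Cubic (x y s : ℝ) : ℝ :=
  ((3 * y + 1) * (y - 1) / 8 + x ^ 2 * y / (2 * (y - 1)))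
    + ((y - 1) * (y ^ 2 - 6 * y + 1) / 8 + x ^ 2 * y / 4) * s
    + (y - 1) ^ 2 * (3 - 2 * y) / 8 * s ^ 2 + (y - 1) ^ 3 / 8 * s ^ 3

def h2CubicDeriv (x y s : ℝ) : ℝ :=
  ((y - 1) * (y ^ 2 - 6 * y + 1) / 8 + x ^ 2 * y / 4)
    + (y - 1) ^ 2 * (3 - 2 * y) / 4 * s + 3 * (y - 1) ^ 3 / 8 * s ^ 2

def h2Primitive (x y s : ℝ) : ℝ :=
  arccos (1 - s * (1 - y)) / 4
    + h2Cubic x y s * √(s * (1 - y) * (s * (y - 1) + 2)) / (s * (y - 1) + 2) ^ 2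

theorem hasDerivAt_h2Cubic (x y s : ℝ) : HasDerivAt (h2Cubic x y) (h2CubicDeriv x y s) s := by
  unfold h2CubicDeriv
  refine ((((hasDerivAt_const s _).add ((hasDerivAt_id s).const_mul _)).add
    ((hasDerivAt_pow 2 s).const_mul _)).add ((hasDerivAt_pow 3 s).const_mul _)).congr_deriv ?_
  push_cast
  ring

theorem hasDerivAt_arccos_one_sub_mul {a s : ℝ} (hs : 0 < s * a) (hs' : s * a < 2) :
    HasDerivAt (fun t => arccos (1 - t * a)) (a / √(s * a * (2 - s * a))) s := by
  have hsqrt : √(1 - (1 - s * a) ^ 2) = √(s * a * (2 - s * a)) := by ring_nf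
  refine ((hasDerivAt_arccos (x := 1 - s * a) (by linarith) (by linarith)).comp s
    (((hasDerivAt_id s).mul_const a).const_sub 1)).congr_deriv ?_
  simp only [hsqrt]
  ring

/-- The identity `h2Primitive' = h2` with the denominator `8 √Q (s(y - 1) + 2)³` cleared, where
`Q = s(1 - y)(s(y - 1) + 2)` and `(√Q)²` has been replaced by `Q`. -/
theorem h2Num_mul_eq {x y : ℝ} (hy : y ≠ 1) (s : ℝ) :
    h2Num x y s * (s * (y - 1) + 2) =
      2 * (1 - y) * (s * (y - 1) + 2) ^ 3
        + 8 * (s * (1 - y) * (s * (y - 1) + 2)) * h2CubicDeriv x y s * (s * (y - 1) + 2)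
        + 4 * h2Cubic x y s * ((1 - y) * (2 * s * (y - 1) + 2)) * (s * (y - 1) + 2)
        - 16 * h2Cubic x y s * (s * (1 - y) * (s * (y - 1) + 2)) * (y - 1) := by
  have : y - 1 ≠ 0 := sub_ne_zero.mpr hy
  unfold h2Num h2Cubic h2CubicDeriv
  field_simp
  ring

theorem hasDerivAt_h2Primitive {x y s : ℝ} (hy : y < 1) (hs : 0 < s)
    (hw : 0 < s * (y - 1) + 2) : HasDerivAt (h2Primitive x y) (h2 x y s) s := by
  have hQ : 0 < s * (1 - y) * (s * (y - 1) + 2) := by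
    have : 0 < 1 - y := by linarith
    positivity
  have harccos := hasDerivAt_arccos_one_sub_mul (a := 1 - y) (s := s) (mul_pos hs (sub_pos.2 hy)) (by linarith)
  rw [show 2 - s * (1 - y) = s * (y - 1) + 2 by ring] at harccos
  have hsqrt : HasDerivAt (fun t => √(t * (1 - y) * (t * (y - 1) + 2)))
      ((1 - y) * (2 * s * (y - 1) + 2) / (2 * √(s * (1 - y) * (s * (y - 1) + 2)))) s := by
    refine (((hasDerivAt_id s).mul_const (1 - y)).mul
      (((hasDerivAt_id s).mul_const (y - 1)).add_const 2) |>.sqrt hQ.ne').congr_deriv ?_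
    simp only [id, Pi.mul_apply]; ring
  have hsq : HasDerivAt (fun t => (t * (y - 1) + 2) ^ 2) (2 * (s * (y - 1) + 2) * (y - 1)) s := by
    refine (((hasDerivAt_id s).mul_const (y - 1)).add_const 2 |>.pow 2).congr_deriv ?_
    simp only [id]; ring
  refine ((harccos.div_const 4).add (((hasDerivAt_h2Cubic x y s).mul hsqrt).div hsq
    (by positivity))).congr_deriv ?_
  have hr : 0 < √(s * (1 - y) * (s * (y - 1) + 2)) := sqrt_pos.mpr hQ
  have hr2 := sq_sqrt hQ.le
  have key := h2Num_mul_eq (x := x) hy.ne s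
  simp only [Pi.mul_apply, h2]
  set w := s * (y - 1) + 2
  set r := √(s * (1 - y) * w)
  symm
  calc h2Num x y s / (8 * w ^ 2 * r) = h2Num x y s * w / (8 * r * w ^ 3) := by
        field_simp
    _ = _ := by rw [key, ← hr2]
    _ = _ := by field_simp; ring

theorem mul_sub_one_add_two_pos {y s : ℝ} (hy : -1 < y) (hy' : y < 1) (hs : s ≤ 1) :
    0 < s * (y - 1) + 2 := by
  nlinarith [mul_nonneg (sub_nonneg.2 hs) (sub_nonneg.2 hy'.le)]

theorem continuousOn_h2Primitive {x y : ℝ} (hy : -1 < y) (hy' : y < 1) :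
    ContinuousOn (h2Primitive x y) (Icc 0 1) := by
  have hw : ∀ s ∈ Icc (0 : ℝ) 1, (s * (y - 1) + 2) ^ 2 ≠ 0 := fun s hs =>
    pow_ne_zero 2 (mul_sub_one_add_two_pos hy hy' hs.2).ne'
  unfold h2Primitive h2Cubic
  fun_prop (disch := assumption)

theorem intervalIntegrable_div_sqrt {g : ℝ → ℝ} {b : ℝ} (hb : 0 ≤ b)
    (hg : ContinuousOn g (Icc 0 b)) : IntervalIntegrable (fun s => g s / √s) volume 0 b := by
  refine ((intervalIntegrable_rpow' (r := -(1 / 2)) (by norm_num)).mul_continuousOn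
    (by rwa [uIcc_of_le hb])).congr fun s hs => ?_
  rw [uIoc_of_le hb] at hs
  simp only [rpow_neg hs.1.le, ← sqrt_eq_rpow, inv_mul_eq_div]

theorem intervalIntegrable_h2 {x y : ℝ} (hy : -1 < y) (hy' : y < 1) :
    IntervalIntegrable (h2 x y) volume 0 1 := by
  have hden : ∀ s ∈ Icc (0 : ℝ) 1,
      8 * (s * (y - 1) + 2) ^ 2 * √((1 - y) * (s * (y - 1) + 2)) ≠ 0 := fun s hs => by
    have := mul_sub_one_add_two_pos hy hy' hs.2
    have : 0 < 1 - y := by linarith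
    positivity
  have hg : ContinuousOn (fun s => h2Num x y s
      / (8 * (s * (y - 1) + 2) ^ 2 * √((1 - y) * (s * (y - 1) + 2)))) (Icc 0 1) := by
    unfold h2Num
    fun_prop (disch := assumption)
  refine (intervalIntegrable_div_sqrt zero_le_one hg).congr fun s hs => ?_
  rw [uIoc_of_le zero_le_one] at hs
  simp only [h2, mul_assoc s, sqrt_mul hs.1.le, div_div]
  ring

theorem h2Primitive_zero (x y : ℝ) : h2Primitive x y 0 = 0 := by
  simp [h2Primitive]

theorem h2Cubic_one {x y : ℝ} (hy : y ≠ 1) :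
    h2Cubic x y 1 = x ^ 2 * y * (y + 1) / (4 * (y - 1)) := by
  have : y - 1 ≠ 0 := sub_ne_zero.mpr hy
  unfold h2Cubic
  field_simp
  ring

theorem h2Primitive_one {x y : ℝ} (hy : -1 < y) (hy' : y < 1) :
    h2Primitive x y 1 = (arccos y - x ^ 2 * y / √(1 - y ^ 2)) / 4 := by
  have h1y2 : 0 < 1 - y ^ 2 := by nlinarith
  have hsq := sq_sqrt h1y2.le
  have : 0 < √(1 - y ^ 2) := sqrt_pos.mpr h1y2
  have : y + 1 ≠ 0 := by linarith
  have : y - 1 ≠ 0 := by linarith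
  rw [h2Primitive, h2Cubic_one hy'.ne, show 1 - 1 * (1 - y) = y by ring,
    show 1 * (1 - y) * (1 * (y - 1) + 2) = 1 - y ^ 2 by ring, show 1 * (y - 1) + 2 = y + 1 by ring]
  field_simp
  linear_combination (y * x ^ 2) * hsq

end ParabolicCatenoid

end

open ParabolicCatenoid

/-- For `x ∈ ℝ` and `y ∈ (0,1)`, the coefficient `h₂` of `d` in the tall-rectangle
height expansion integrates over `s ∈ [0,1]` to `(1/4)(arccos y - x²y/√(1-y²))`;
in particular this is the negative of `∫₀¹ a₂(x,y,s) ds = (1/4)(x²y/√(1-y²) - arccos y)`,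
so the Jacobi field generated by deformation into tall rectangles is the negative of the
one generated by deformation into catenoids. -/
theorem integral_h2 :
    ∀ x : ℝ, ∀ y ∈ Set.Ioo (0 : ℝ) 1,
      (∫ s in (0 : ℝ)..1,
        (-2 * s ^ 4 * (y - 1) ^ 5 + 2 * s ^ 3 * (y - 5) * (y - 1) ^ 4
          + s ^ 2 * (10 * y - 17) * (y - 1) ^ 3
          + 2 * s * (y - 1) * (-(x ^ 2 + 14) * y + 8 * y ^ 2 + 6)
          - y * (4 * x ^ 2 + y * (3 * y - 5) + 9) + 7)
        / (8 * (s * (y - 1) + 2) ^ 2 * Real.sqrt (s * (1 - y) * (s * (y - 1) + 2))))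
      = (1 / 4) * (Real.arccos y - x ^ 2 * y / Real.sqrt (1 - y ^ 2)) ∧
      (1 / 4) * (Real.arccos y - x ^ 2 * y / Real.sqrt (1 - y ^ 2))
        = -((1 / 4) * (x ^ 2 * y / Real.sqrt (1 - y ^ 2) - Real.arccos y)) := by
  rintro x y ⟨hy0, hy1⟩
  refine ⟨?_, by ring⟩
  change ∫ s in (0 : ℝ)..1, h2 x y s = _
  have hy : -1 < y := by linarith
  rw [integral_eq_sub_of_hasDerivAt_of_le zero_le_one (continuousOn_h2Primitive hy hy1)
      (fun s hs => hasDerivAt_h2Primitive hy1 hs.1 (mul_sub_one_add_two_pos hy hy1 hs.2.le))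
      (intervalIntegrable_h2 hy hy1),
    h2Primitive_one hy hy1, h2Primitive_zero]
  ring
end

section
/- Let u : ℝ × [0,π] → ℝ be twice continuously differentiable, satisfy ∂²u/∂x² + ∂²u/∂t² + u = 0 on ℝ × (0,π), vanish on the boundary (u(x,0) = u(x,π) = 0 for all x ∈ ℝ), and have at most polynomial growth: there exist C > 0 and N ∈ ℕ with |u(x,t)| ≤ C(1 + |x|)^N for all (x,t). Then there exist real constants a, b such that u(x,t) = (a + b·x)·sin t for all (x,t) ∈ ℝ × [0,π]. -/
/-!
The sine coefficients `f n x = ∫ t in 0..π, u x t * sin (n t)` satisfy `(f n)'' = (n² - 1) f n`: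
differentiate under the integral sign in `x`, use the equation, and integrate by parts twice in
`t`, the boundary terms vanishing with `u`. For `n ≥ 2` the solutions are combinations of
`exp (± √(n² - 1) x)`, and polynomial growth kills both; `f 0 = 0` and `f 1` is affine. The sine
system is complete on `[0, π]`: after the substitution `s = cos t`, orthogonality to
`sin ((n + 1) t) = U n (cos t) * sin t` (Chebyshev polynomials of the second kind) becomes
orthogonality to all polynomials, which forces vanishing by Weierstrass approximation.
Hence `u x = (2 / π) f 1 x • sin`.
-/

open Set Filter Topology MeasureTheory Real Function

lemma eq_mul_exp_of_hasDerivAt {f : ℝ → ℝ} {c : ℝ} (hf : ∀ x, HasDerivAt f (c * f x) x)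
    (x : ℝ) : f x = f 0 * exp (c * x) := by
  have hconst : ∀ y, HasDerivAt (fun y => f y * exp (-(c * y))) 0 y := fun y => by
    have hexp : HasDerivAt (fun y => exp (-(c * y))) (exp (-(c * y)) * -c) y := by
      simpa using ((hasDerivAt_id y).const_mul c).neg.exp
    exact ((hf y).mul hexp).congr_deriv (by ring)
  have h := is_const_of_deriv_eq_zero (fun y => (hconst y).differentiableAt)
    (fun y => (hconst y).deriv) x 0
  simp only [mul_zero, neg_zero, exp_zero, mul_one] at h
  rw [← h, mul_assoc, ← exp_add, neg_add_cancel, exp_zero, mul_one]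

lemma tendsto_one_add_abs_pow_mul_exp_neg_mul {μ : ℝ} (hμ : 0 < μ) (N : ℕ) :
    Tendsto (fun x => (1 + |x|) ^ N * exp (-(μ * x))) atTop (𝓝 0) := by
  have hlin : Tendsto (fun x => μ * (1 + x)) atTop atTop :=
    (tendsto_atTop_add_const_left _ 1 tendsto_id).const_mul_atTop hμ
  have h := ((tendsto_pow_mul_exp_neg_atTop_nhds_zero N).comp hlin).const_mul (exp μ / μ ^ N)
  rw [mul_zero] at h
  refine h.congr' ?_
  filter_upwards [eventually_ge_atTop 0] with x hx
  simp only [Function.comp, abs_of_nonneg hx, mul_add, mul_one, neg_add, exp_add, exp_neg]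
  field_simp
  rw [← mul_pow, mul_one_add]

lemma eq_zero_of_abs_mul_exp_add_le {A B μ C : ℝ} {N : ℕ} (hμ : 0 < μ)
    (hbound : ∀ x, |A * exp (μ * x) + B * exp (-(μ * x))| ≤ C * (1 + |x|) ^ N) : A = 0 := by
  have hlim : Tendsto (fun x => C * ((1 + |x|) ^ N * exp (-(μ * x)))
      + |B| * exp (-((2 * μ) * x))) atTop (𝓝 0) := by
    simpa using ((tendsto_one_add_abs_pow_mul_exp_neg_mul hμ N).const_mul C).add
      ((tendsto_one_add_abs_pow_mul_exp_neg_mul (by positivity : 0 < 2 * μ) 0).const_mul |B|)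
  refine abs_nonpos_iff.1 (ge_of_tendsto' hlim fun x => ?_)
  have hA : A = (A * exp (μ * x) + B * exp (-(μ * x))) * exp (-(μ * x))
      - B * exp (-((2 * μ) * x)) := by
    have h1 : exp (μ * x) * exp (-(μ * x)) = 1 := by rw [← exp_add, add_neg_cancel, exp_zero]
    have h2 : exp (-(μ * x)) * exp (-(μ * x)) = exp (-((2 * μ) * x)) := by rw [← exp_add]; ring_nf
    linear_combination (-A) * h1 - B * h2
  calc |A| ≤ |A * exp (μ * x) + B * exp (-(μ * x))| * exp (-(μ * x))
        + |B| * exp (-((2 * μ) * x)) := by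
        conv_lhs => rw [hA]
        refine (abs_sub _ _).trans ?_
        simp only [abs_mul, abs_exp, le_refl]
    _ ≤ C * (1 + |x|) ^ N * exp (-(μ * x)) + |B| * exp (-((2 * μ) * x)) := by
        gcongr
        exact hbound x
    _ = _ := by ring

lemma eq_zero_of_hasDerivAt_of_abs_le {v w : ℝ → ℝ} {lam C : ℝ} {N : ℕ} (hlam : 0 < lam)
    (hv : ∀ x, HasDerivAt v (w x) x) (hw : ∀ x, HasDerivAt w (lam * v x) x)
    (hbound : ∀ x, |v x| ≤ C * (1 + |x|) ^ N) (x : ℝ) : v x = 0 := by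
  set μ := √lam
  have hμ : 0 < μ := sqrt_pos.2 hlam
  have hμμ : μ * μ = lam := mul_self_sqrt hlam.le
  -- `w ± μ v` solve first-order equations, so `v` is a combination of `exp (± μ x)`
  have hgrow := eq_mul_exp_of_hasDerivAt (f := fun x => w x + μ * v x) (c := μ)
    fun x => ((hw x).add ((hv x).const_mul μ)).congr_deriv (by rw [← hμμ]; ring)
  have hdecay := eq_mul_exp_of_hasDerivAt (f := fun x => w x - μ * v x) (c := -μ)
    fun x => ((hw x).sub ((hv x).const_mul μ)).congr_deriv (by rw [← hμμ]; ring)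
  set A := (w 0 + μ * v 0) / (2 * μ)
  set B := -(w 0 - μ * v 0) / (2 * μ)
  have hv_eq : ∀ x, v x = A * exp (μ * x) + B * exp (-(μ * x)) := fun x => by
    rw [show v x = ((w x + μ * v x) - (w x - μ * v x)) / (2 * μ) by field_simp; ring,
      hgrow, hdecay, neg_mul]
    ring
  have hA : A = 0 := eq_zero_of_abs_mul_exp_add_le hμ fun x => hv_eq x ▸ hbound x
  have hB : B = 0 := eq_zero_of_abs_mul_exp_add_le (B := A) hμ fun x => by
    simpa [hv_eq, abs_neg, add_comm] using hbound (-x)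
  simp [hv_eq, hA, hB]

lemma eq_add_mul_of_hasDerivAt {v w : ℝ → ℝ} (hv : ∀ x, HasDerivAt v (w x) x)
    (hw : ∀ x, HasDerivAt w 0 x) (x : ℝ) : v x = v 0 + w 0 * x := by
  have hw_const : ∀ y, w y = w 0 := fun y => is_const_of_deriv_eq_zero
    (fun y => (hw y).differentiableAt) (fun y => (hw y).deriv) y 0
  have h := is_const_of_deriv_eq_zero (f := fun y => v y - w 0 * y)
    (fun y => ((hv y).sub ((hasDerivAt_id y).const_mul (w 0))).differentiableAt)
    (fun y => ((hv y).sub ((hasDerivAt_id y).const_mul (w 0))).deriv.trans (by simp [hw_const y]))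
    x 0
  simp only [mul_zero, sub_zero] at h
  linarith

lemma hasDerivAt_sin_mul (c t : ℝ) : HasDerivAt (fun s => sin (c * s)) (c * cos (c * t)) t := by
  simpa [mul_comm] using ((hasDerivAt_id t).const_mul c).sin

lemma hasDerivAt_cos_mul (c t : ℝ) : HasDerivAt (fun s => cos (c * s)) (-(c * sin (c * t))) t := by
  simpa [mul_comm] using ((hasDerivAt_id t).const_mul c).cos

lemma hasDerivAt_intervalIntegral_of_continuousOn {F : ℝ → ℝ → ℝ} {F' : ℝ × ℝ → ℝ} {a b : ℝ}
    (hab : a ≤ b) (hF : ∀ x, ContinuousOn (F x) (Icc a b))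
    (hF' : ContinuousOn F' (univ ×ˢ Icc a b))
    (hderiv : ∀ t ∈ Icc a b, ∀ x, HasDerivAt (F · t) (F' (x, t)) x) (x₀ : ℝ) :
    HasDerivAt (fun x => ∫ t in a..b, F x t) (∫ t in a..b, F' (x₀, t)) x₀ := by
  obtain ⟨M, hM⟩ := (isCompact_Icc.prod isCompact_Icc).exists_bound_of_continuousOn
    (hF'.mono (prod_mono (subset_univ (Icc (x₀ - 1) (x₀ + 1))) subset_rfl))
  have hslice : ContinuousOn (fun t => F' (x₀, t)) (Icc a b) :=
    hF'.comp (continuous_const.prodMk continuous_id).continuousOn fun _ ht => ⟨trivial, ht⟩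
  refine (intervalIntegral.hasDerivAt_integral_of_dominated_loc_of_deriv_le
    (F' := fun x t => F' (x, t)) (bound := fun _ => M) (Metric.ball_mem_nhds x₀ one_pos) ?_
    ((hF x₀).intervalIntegrable_of_Icc hab) ?_ ?_ intervalIntegrable_const ?_).2
  · exact .of_forall fun x => ((hF x).intervalIntegrable_of_Icc hab).def'.aestronglyMeasurable
  · exact (hslice.intervalIntegrable_of_Icc hab).def'.aestronglyMeasurable
  · refine .of_forall fun t ht x hx => hM (x, t) ⟨?_, Ioc_subset_Icc_self ?_⟩
    · rw [Metric.mem_ball, dist_eq, abs_lt] at hx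
      constructor <;> linarith
    · rwa [uIoc_of_le hab] at ht
  · refine .of_forall fun t ht x _ => hderiv t (Ioc_subset_Icc_self ?_) x
    rwa [uIoc_of_le hab] at ht

noncomputable def sineCoeff (φ : ℝ → ℝ) (n : ℕ) : ℝ := ∫ t in (0 : ℝ)..π, φ t * sin (n * t)

lemma abs_sineCoeff_le {φ : ℝ → ℝ} {M : ℝ} (hφ : ∀ t ∈ Icc 0 π, |φ t| ≤ M) (n : ℕ) :
    |sineCoeff φ n| ≤ π * M := by
  have h := intervalIntegral.norm_integral_le_of_norm_le_const (a := 0) (b := π)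
    (f := fun t => φ t * sin (n * t)) (C := M) fun t ht => by
      rw [uIoc_of_le pi_pos.le] at ht
      rw [norm_mul, Real.norm_eq_abs, Real.norm_eq_abs]
      exact (mul_le_of_le_one_right (abs_nonneg _) (abs_sin_le_one _)).trans
        (hφ t (Ioc_subset_Icc_self ht))
  rwa [sub_zero, abs_of_pos pi_pos, mul_comm] at h

lemma sineCoeff_sin_one : sineCoeff sin 1 = π / 2 := by
  simp [sineCoeff, ← sq, integral_sin_sq]

lemma sineCoeff_sin_of_ne_one {n : ℕ} (hn : n ≠ 1) : sineCoeff sin n = 0 := by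
  have hm : (n : ℝ) ^ 2 - 1 ≠ 0 := by
    rw [sub_ne_zero, ne_eq, pow_eq_one_iff_of_nonneg n.cast_nonneg two_ne_zero]
    exact_mod_cast hn
  have hG : ∀ t, HasDerivAt (fun t => (cos t * sin (n * t) - n * sin t * cos (n * t)) / (n ^ 2 - 1))
      (sin t * sin (n * t)) t := fun t => by
    refine ((((hasDerivAt_cos t).mul (hasDerivAt_sin_mul n t)).sub
      (((hasDerivAt_sin t).const_mul (n : ℝ)).mul (hasDerivAt_cos_mul n t))).div_const
        ((n : ℝ) ^ 2 - 1)).congr_deriv ?_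
    field_simp
    ring
  rw [sineCoeff, intervalIntegral.integral_eq_sub_of_hasDerivAt (fun t _ => hG t)
    ((by fun_prop : Continuous fun t => sin t * sin (n * t)).intervalIntegrable _ _)]
  simp [sin_nat_mul_pi]

lemma ContinuousOn.intervalIntegrable_mul_sin {φ : ℝ → ℝ} (hφ : ContinuousOn φ (Icc 0 π))
    (n : ℕ) : IntervalIntegrable (fun t => φ t * sin (n * t)) volume 0 π :=
  (hφ.mul (by fun_prop)).intervalIntegrable_of_Icc pi_pos.le

lemma sineCoeff_eq_neg_of_hasDerivWithinAt {φ φ' φ'' : ℝ → ℝ}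
    (hφ : ∀ t ∈ Icc 0 π, HasDerivWithinAt φ (φ' t) (Icc 0 π) t)
    (hφ' : ∀ t ∈ Icc 0 π, HasDerivWithinAt φ' (φ'' t) (Icc 0 π) t)
    (hφ'' : ContinuousOn φ'' (Icc 0 π)) (h0 : φ 0 = 0) (hπ : φ π = 0) (n : ℕ) :
    sineCoeff φ'' n = -(n ^ 2 * sineCoeff φ n) := by
  have hφc : ContinuousOn φ (Icc 0 π) := fun t ht => (hφ t ht).continuousWithinAt
  have hφ'c : ContinuousOn φ' (Icc 0 π) := fun t ht => (hφ' t ht).continuousWithinAt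
  have hderiv : ∀ t ∈ Ioo 0 π, HasDerivAt (fun t => φ' t * sin (n * t) - n * φ t * cos (n * t))
      (φ'' t * sin (n * t) + n ^ 2 * (φ t * sin (n * t))) t := fun t ht => by
    have hnhds := Icc_mem_nhds ht.1 ht.2
    refine ((((hφ' t (Ioo_subset_Icc_self ht)).hasDerivAt hnhds).mul (hasDerivAt_sin_mul n t)).sub
      ((((hφ t (Ioo_subset_Icc_self ht)).hasDerivAt hnhds).const_mul (n : ℝ)).mul
        (hasDerivAt_cos_mul n t))).congr_deriv ?_
    ring
  have hcont : ContinuousOn (fun t => φ' t * sin (n * t) - n * φ t * cos (n * t)) (Icc 0 π) :=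
    (hφ'c.mul (by fun_prop)).sub ((continuousOn_const.mul hφc).mul (by fun_prop))
  have hFTC := intervalIntegral.integral_eq_sub_of_hasDerivAt_of_le pi_pos.le hcont hderiv
    ((hφ''.intervalIntegrable_mul_sin n).add ((hφc.intervalIntegrable_mul_sin n).const_mul _))
  rw [intervalIntegral.integral_add (hφ''.intervalIntegrable_mul_sin n)
    ((hφc.intervalIntegrable_mul_sin n).const_mul _), intervalIntegral.integral_const_mul] at hFTC
  simp only [h0, hπ, sin_nat_mul_pi, mul_zero, zero_mul, sin_zero, sub_self] at hFTC
  rw [sineCoeff, sineCoeff]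
  linarith

lemma hasDerivAt_sineCoeff {φ : ℝ → ℝ → ℝ} {φ' : ℝ × ℝ → ℝ}
    (hφ : ∀ x, ContinuousOn (φ x) (Icc 0 π)) (hφ' : ContinuousOn φ' (univ ×ˢ Icc 0 π))
    (hderiv : ∀ t ∈ Icc 0 π, ∀ x, HasDerivAt (φ · t) (φ' (x, t)) x) (n : ℕ) (x₀ : ℝ) :
    HasDerivAt (fun x => sineCoeff (φ x) n) (sineCoeff (fun t => φ' (x₀, t)) n) x₀ :=
  hasDerivAt_intervalIntegral_of_continuousOn pi_pos.le
    (fun x => (hφ x).mul (by fun_prop : Continuous fun t : ℝ => sin (n * t)).continuousOn)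
    (hφ'.mul (by fun_prop : Continuous fun p : ℝ × ℝ => sin (n * p.2)).continuousOn)
    (fun t ht x => (hderiv t ht x).mul_const _) x₀

lemma sineCoeff_add {φ ψ : ℝ → ℝ} (hφ : ContinuousOn φ (Icc 0 π)) (hψ : ContinuousOn ψ (Icc 0 π))
    (n : ℕ) : sineCoeff (fun t => φ t + ψ t) n = sineCoeff φ n + sineCoeff ψ n := by
  simp only [sineCoeff, add_mul]
  exact intervalIntegral.integral_add (hφ.intervalIntegrable_mul_sin n)
    (hψ.intervalIntegrable_mul_sin n)

lemma sineCoeff_sub {φ ψ : ℝ → ℝ} (hφ : ContinuousOn φ (Icc 0 π)) (hψ : ContinuousOn ψ (Icc 0 π))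
    (n : ℕ) : sineCoeff (fun t => φ t - ψ t) n = sineCoeff φ n - sineCoeff ψ n := by
  simp only [sineCoeff, sub_mul]
  exact intervalIntegral.integral_sub (hφ.intervalIntegrable_mul_sin n)
    (hψ.intervalIntegrable_mul_sin n)

lemma sineCoeff_const_mul (φ : ℝ → ℝ) (c : ℝ) (n : ℕ) :
    sineCoeff (fun t => c * φ t) n = c * sineCoeff φ n := by
  simp only [sineCoeff, mul_assoc]
  exact intervalIntegral.integral_const_mul c _

open Polynomial in
theorem Polynomial.Chebyshev.span_U_eq_top (K : Type*) [Field K] [NeZero (2 : K)] :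
    Submodule.span K (range fun n : ℕ => U K n) = ⊤ := by
  refine eq_top_iff.2 fun p _ => ?_
  induction hd : p.natDegree using Nat.strong_induction_on generalizing p with
  | _ d ih =>
    set c := p.leadingCoeff / 2 ^ d
    have hU : c • U K d ∈ Submodule.span K (range fun n : ℕ => U K n) :=
      Submodule.smul_mem _ _ (Submodule.subset_span ⟨d, rfl⟩)
    have hrest : p - c • U K d ∈ Submodule.span K (range fun n : ℕ => U K n) := by
      by_cases h0 : p - c • U K d = 0
      · rw [h0]; exact Submodule.zero_mem _
      have hp : p ≠ 0 := by rintro rfl; simp [c] at h0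
      have hc : c ≠ 0 := div_ne_zero (leadingCoeff_ne_zero.2 hp) (pow_ne_zero _ two_ne_zero)
      have hdeg : (p - c • U K d).degree < p.degree := by
        refine degree_sub_lt_left ?_ hp ?_
        · rw [smul_eq_C_mul, degree_C_mul hc, degree_U_natCast, degree_eq_natDegree hp, hd]
        · rw [smul_eq_C_mul, leadingCoeff_mul, leadingCoeff_C, leadingCoeff_U_natCast]
          simp only [c]
          field_simp
      have hlt := natDegree_lt_natDegree h0 hdeg
      rw [hd] at hlt
      exact ih _ hlt _ trivial rfl
    simpa using add_mem hrest hU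

lemma eqOn_zero_of_integral_mul_eval_eq_zero {q : ℝ → ℝ} {a b : ℝ} (hab : a < b)
    (hq : ContinuousOn q (Icc a b)) (horth : ∀ p : Polynomial ℝ, ∫ x in a..b, q x * p.eval x = 0) :
    EqOn q 0 (Icc a b) := by
  have hqq : ContinuousOn (fun x => q x * q x) (Icc a b) := hq.mul hq
  have hint : ∀ {g : ℝ → ℝ}, ContinuousOn g (Icc a b) → IntervalIntegrable g volume a b :=
    fun hg => hg.intervalIntegrable_of_Icc hab.le
  obtain ⟨M, hM⟩ := isCompact_Icc.exists_bound_of_continuousOn hq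
  -- approximate the second factor of `q * q` by polynomials
  have hsmall : ∀ ε > 0, ∫ x in a..b, q x * q x ≤ M * ε * (b - a) := fun ε hε => by
    obtain ⟨p, hp⟩ := exists_polynomial_near_of_continuousOn a b q hq ε hε
    have hp_cont : ContinuousOn (fun x => p.eval x) (Icc a b) := p.continuous.continuousOn
    have hsplit : ∫ x in a..b, q x * q x = ∫ x in a..b, q x * (q x - p.eval x) := by
      rw [← sub_zero (∫ x in a..b, q x * q x), ← horth p,
        ← intervalIntegral.integral_sub (hint hqq) (hint (g := fun x => q x * p.eval x)
          (hq.mul hp_cont))]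
      simp only [mul_sub]
    rw [hsplit]
    refine (le_abs_self _).trans ?_
    rw [← Real.norm_eq_abs, ← abs_of_pos (sub_pos.2 hab)]
    refine intervalIntegral.norm_integral_le_of_norm_le_const fun x hx => ?_
    have hx' : x ∈ Icc a b := Ioc_subset_Icc_self (uIoc_of_le hab.le ▸ hx)
    rw [norm_mul]
    gcongr
    · exact (norm_nonneg _).trans (hM x hx')
    · exact hM x hx'
    · rw [Real.norm_eq_abs, abs_sub_comm]; exact (hp x hx').le
  have hlim : Tendsto (fun ε => M * ε * (b - a)) (𝓝[>] 0) (𝓝 0) :=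
    (Continuous.tendsto' (by fun_prop) 0 0 (by simp)).mono_left nhdsWithin_le_nhds
  have hzero : ∫ x in a..b, q x * q x ≤ 0 :=
    ge_of_tendsto hlim (eventually_nhdsWithin_of_forall hsmall)
  intro c hc
  by_contra hqc
  have hpos := intervalIntegral.integral_pos hab hqq (fun x _ => mul_self_nonneg (q x))
    ⟨c, hc, mul_self_pos.2 hqc⟩
  linarith

lemma integral_comp_cos_mul_sin {G : ℝ → ℝ} (hG : Continuous G) :
    ∫ t in (0 : ℝ)..π, G (cos t) * sin t = ∫ s in (-1 : ℝ)..1, G s := by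
  have h := intervalIntegral.integral_comp_mul_deriv (a := 0) (b := π)
    (fun t _ => hasDerivAt_cos t) continuous_sin.neg.continuousOn hG
  simp only [Function.comp_def, mul_neg, intervalIntegral.integral_neg, cos_zero, cos_pi,
    intervalIntegral.integral_symm (-1) 1, neg_inj] at h
  exact h

open Polynomial.Chebyshev in
lemma eqOn_zero_of_sineCoeff_eq_zero {k : ℝ → ℝ} (hk : ContinuousOn k (Icc 0 π))
    (hcoeff : ∀ n, sineCoeff k n = 0) : EqOn k 0 (Icc 0 π) := by
  set q := fun s => k (arccos s)
  have hq : Continuous q := hk.comp_continuous continuous_arccos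
    fun s => ⟨arccos_nonneg s, arccos_le_pi s⟩
  have hU : ∀ n : ℕ, ∫ s in (-1 : ℝ)..1, q s * (U ℝ n).eval s = 0 := fun n => by
    rw [← integral_comp_cos_mul_sin (G := fun s => q s * (U ℝ n).eval s)
      (hq.mul (U ℝ n).continuous)]
    refine (intervalIntegral.integral_congr fun t ht => ?_).trans (hcoeff (n + 1))
    rw [uIcc_of_le pi_pos.le] at ht
    simp only [q, arccos_cos ht.1 ht.2, mul_assoc, U_real_cos, Int.cast_natCast, Nat.cast_succ]
  have horth : ∀ p : Polynomial ℝ, ∫ s in (-1 : ℝ)..1, q s * p.eval s = 0 := fun p => by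
    have hp : p ∈ Submodule.span ℝ (range fun n : ℕ => U ℝ n) :=
      span_U_eq_top ℝ ▸ Submodule.mem_top
    induction hp using Submodule.span_induction with
    | mem _ hx => obtain ⟨n, rfl⟩ := hx; exact hU n
    | zero => simp
    | add p₁ p₂ _ _ h₁ h₂ =>
      simp only [Polynomial.eval_add, mul_add]
      have hint : ∀ p : Polynomial ℝ, IntervalIntegrable (fun s => q s * p.eval s) volume (-1) 1 :=
        fun p => (hq.mul p.continuous).intervalIntegrable _ _
      rw [intervalIntegral.integral_add (hint p₁) (hint p₂), h₁, h₂, add_zero]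
    | smul c p _ hp =>
      simp only [Polynomial.eval_smul, smul_eq_mul, mul_left_comm _ c]
      rw [intervalIntegral.integral_const_mul, hp, mul_zero]
  intro t ht
  have hq0 := eqOn_zero_of_integral_mul_eval_eq_zero (by norm_num) hq.continuousOn horth
    ⟨neg_one_le_cos t, cos_le_one t⟩
  simpa [q, arccos_cos ht.1 ht.2] using hq0

lemma eqOn_mul_sin_of_sineCoeff_eq_zero {φ : ℝ → ℝ} (hφ : ContinuousOn φ (Icc 0 π))
    (hcoeff : ∀ n, 2 ≤ n → sineCoeff φ n = 0) :
    EqOn φ (fun t => 2 / π * sineCoeff φ 1 * sin t) (Icc 0 π) := by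
  refine fun t ht => sub_eq_zero.1 (eqOn_zero_of_sineCoeff_eq_zero (k := fun t =>
    φ t - 2 / π * sineCoeff φ 1 * sin t) (hφ.sub (by fun_prop)) (fun n => ?_) ht)
  rw [sineCoeff_sub hφ (by fun_prop), sineCoeff_const_mul]
  rcases n with _ | _ | n
  · simp [sineCoeff]
  · rw [sineCoeff_sin_one]
    field_simp
    ring
  · rw [sineCoeff_sin_of_ne_one (by omega), hcoeff (n + 2) (by omega)]
    ring

section Slices

variable {E : Type*} [NormedAddCommGroup E] [NormedSpace ℝ E] {g : ℝ × ℝ → E}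
  {g' : ℝ × ℝ →L[ℝ] E} {T : Set ℝ} {x t : ℝ}

lemma HasFDerivWithinAt.hasDerivAt_fst_slice (hg : HasFDerivWithinAt g g' (univ ×ˢ T) (x, t))
    (ht : t ∈ T) : HasDerivAt (fun y => g (y, t)) (g' (1, 0)) x := by
  have h := hg.comp_hasDerivWithinAt (s := univ) x
    ((hasDerivAt_id x).prodMk (hasDerivAt_const x t)).hasDerivWithinAt
    fun _ _ => mk_mem_prod (mem_univ _) ht
  rwa [hasDerivWithinAt_univ] at h

lemma HasFDerivWithinAt.hasDerivWithinAt_snd_slice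
    (hg : HasFDerivWithinAt g g' (univ ×ˢ T) (x, t)) :
    HasDerivWithinAt (fun s => g (x, s)) (g' (0, 1)) T t :=
  hg.comp_hasDerivWithinAt t ((hasDerivAt_const t x).prodMk (hasDerivAt_id t)).hasDerivWithinAt
    fun _ hs => ⟨trivial, hs⟩

end Slices

def strip : Set (ℝ × ℝ) := univ ×ˢ Icc 0 π

lemma mk_mem_strip (x : ℝ) {t : ℝ} (ht : t ∈ Icc 0 π) : (x, t) ∈ strip := ⟨trivial, ht⟩

lemma uniqueDiffOn_strip : UniqueDiffOn ℝ strip :=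
  uniqueDiffOn_univ.prod (uniqueDiffOn_Icc pi_pos)

section StripDeriv

variable {E : Type*} [NormedAddCommGroup E] [NormedSpace ℝ E]

noncomputable def stripDeriv (f : ℝ × ℝ → E) : ℝ × ℝ → ℝ × ℝ →L[ℝ] E := fderivWithin ℝ f strip

variable {f : ℝ × ℝ → E} {n : WithTop ℕ∞}

lemma ContDiffOn.hasFDerivWithinAt_stripDeriv (hf : ContDiffOn ℝ n f strip) (hn : n ≠ 0)
    {p : ℝ × ℝ} (hp : p ∈ strip) : HasFDerivWithinAt f (stripDeriv f p) strip p :=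
  (hf.differentiableOn hn p hp).hasFDerivWithinAt

lemma ContDiffOn.stripDeriv {m : WithTop ℕ∞} (hf : ContDiffOn ℝ n f strip) (hmn : m + 1 ≤ n) :
    ContDiffOn ℝ m (stripDeriv f) strip :=
  hf.fderivWithin uniqueDiffOn_strip hmn

end StripDeriv

lemma ContinuousOn.comp_mk_strip {F : ℝ × ℝ → ℝ} (hF : ContinuousOn F strip) (x : ℝ) :
    ContinuousOn (fun t => F (x, t)) (Icc 0 π) :=
  hF.comp (continuous_const.prodMk continuous_id).continuousOn fun _ ht => mk_mem_strip x ht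

section JacobiField

variable {u : ℝ → ℝ → ℝ} (hu : ContDiffOn ℝ 2 (uncurry u) strip)
include hu

lemma hasDerivAt_stripDeriv_fst {t : ℝ} (ht : t ∈ Icc 0 π) (x : ℝ) :
    HasDerivAt (u · t) (stripDeriv (uncurry u) (x, t) (1, 0)) x :=
  (hu.hasFDerivWithinAt_stripDeriv two_ne_zero (mk_mem_strip x ht)).hasDerivAt_fst_slice ht

lemma hasDerivAt_stripDeriv_fst_fst {t : ℝ} (ht : t ∈ Icc 0 π) (x : ℝ) :
    HasDerivAt (fun y => stripDeriv (uncurry u) (y, t) (1, 0))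
      (stripDeriv (stripDeriv (uncurry u)) (x, t) (1, 0) (1, 0)) x := by
  have h := ((hu.stripDeriv (m := 1) (by norm_num)).hasFDerivWithinAt_stripDeriv one_ne_zero
    (mk_mem_strip x ht)).hasDerivAt_fst_slice ht
  simpa using h.clm_apply (hasDerivAt_const x ((1 : ℝ), (0 : ℝ)))

lemma hasDerivWithinAt_stripDeriv_snd (x : ℝ) {t : ℝ} (ht : t ∈ Icc 0 π) :
    HasDerivWithinAt (u x) (stripDeriv (uncurry u) (x, t) (0, 1)) (Icc 0 π) t :=
  (hu.hasFDerivWithinAt_stripDeriv two_ne_zero (mk_mem_strip x ht)).hasDerivWithinAt_snd_slice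

lemma hasDerivWithinAt_stripDeriv_snd_snd (x : ℝ) {t : ℝ} (ht : t ∈ Icc 0 π) :
    HasDerivWithinAt (fun s => stripDeriv (uncurry u) (x, s) (0, 1))
      (stripDeriv (stripDeriv (uncurry u)) (x, t) (0, 1) (0, 1)) (Icc 0 π) t := by
  have h := ((hu.stripDeriv (m := 1) (by norm_num)).hasFDerivWithinAt_stripDeriv one_ne_zero
    (mk_mem_strip x ht)).hasDerivWithinAt_snd_slice
  simpa using h.clm_apply (hasDerivWithinAt_const t _ ((0 : ℝ), (1 : ℝ)))

lemma continuousOn_stripDeriv_apply (v : ℝ × ℝ) :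
    ContinuousOn (fun p => stripDeriv (uncurry u) p v) strip :=
  (hu.stripDeriv (m := 1) (by norm_num)).continuousOn.clm_apply continuousOn_const

lemma continuousOn_stripDeriv_stripDeriv_apply (v w : ℝ × ℝ) :
    ContinuousOn (fun p => stripDeriv (stripDeriv (uncurry u)) p v w) strip :=
  (((hu.stripDeriv (m := 1) (by norm_num)).stripDeriv (m := 0) (by norm_num)).continuousOn.clm_apply
    continuousOn_const).clm_apply continuousOn_const

lemma laplacian_eq_stripDeriv (x : ℝ) {t : ℝ} (ht : t ∈ Ioo 0 π) :
    deriv (fun a => deriv (fun b => u b t) a) x + deriv (fun a => deriv (fun b => u x b) a) t =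
      stripDeriv (stripDeriv (uncurry u)) (x, t) (1, 0) (1, 0)
        + stripDeriv (stripDeriv (uncurry u)) (x, t) (0, 1) (0, 1) := by
  have ht' := Ioo_subset_Icc_self ht
  have hxx : deriv (fun a => deriv (fun b => u b t) a) x
      = stripDeriv (stripDeriv (uncurry u)) (x, t) (1, 0) (1, 0) := by
    simp_rw [fun a => (hasDerivAt_stripDeriv_fst hu ht' a).deriv]
    exact (hasDerivAt_stripDeriv_fst_fst hu ht' x).deriv
  have htt : deriv (fun a => deriv (fun b => u x b) a) t
      = stripDeriv (stripDeriv (uncurry u)) (x, t) (0, 1) (0, 1) := by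
    have heq : (fun s => deriv (u x) s) =ᶠ[𝓝 t] fun s => stripDeriv (uncurry u) (x, s) (0, 1) := by
      filter_upwards [Ioo_mem_nhds ht.1 ht.2] with s hs
      exact ((hasDerivWithinAt_stripDeriv_snd hu x (Ioo_subset_Icc_self hs)).hasDerivAt
        (Icc_mem_nhds hs.1 hs.2)).deriv
    rw [heq.deriv_eq]
    exact ((hasDerivWithinAt_stripDeriv_snd_snd hu x ht').hasDerivAt (Icc_mem_nhds ht.1 ht.2)).deriv
  rw [hxx, htt]

lemma hasDerivAt_sineCoeff_apply (n : ℕ) (x : ℝ) :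
    HasDerivAt (fun x => sineCoeff (u x) n)
      (sineCoeff (fun t => stripDeriv (uncurry u) (x, t) (1, 0)) n) x :=
  hasDerivAt_sineCoeff (fun x => hu.continuousOn.comp_mk_strip x)
    (continuousOn_stripDeriv_apply hu (1, 0)) (fun _ ht => hasDerivAt_stripDeriv_fst hu ht) n x

lemma hasDerivAt_sineCoeff_stripDeriv
    (hpde : ∀ x, ∀ t ∈ Ioo 0 π, stripDeriv (stripDeriv (uncurry u)) (x, t) (1, 0) (1, 0)
      + stripDeriv (stripDeriv (uncurry u)) (x, t) (0, 1) (0, 1) + u x t = 0)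
    (hb0 : ∀ x, u x 0 = 0) (hbπ : ∀ x, u x π = 0) (n : ℕ) (x : ℝ) :
    HasDerivAt (fun x => sineCoeff (fun t => stripDeriv (uncurry u) (x, t) (1, 0)) n)
      ((n ^ 2 - 1) * sineCoeff (u x) n) x := by
  have hxx := hasDerivAt_sineCoeff
    (fun x => (continuousOn_stripDeriv_apply hu (1, 0)).comp_mk_strip x)
    (continuousOn_stripDeriv_stripDeriv_apply hu (1, 0) (1, 0))
    (fun _ ht => hasDerivAt_stripDeriv_fst_fst hu ht) n x
  have hu_cont : ContinuousOn (u x) (Icc 0 π) := hu.continuousOn.comp_mk_strip x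
  have hxx_cont := (continuousOn_stripDeriv_stripDeriv_apply hu (1, 0) (1, 0)).comp_mk_strip x
  have htt_cont := (continuousOn_stripDeriv_stripDeriv_apply hu (0, 1) (0, 1)).comp_mk_strip x
  have htt := sineCoeff_eq_neg_of_hasDerivWithinAt (fun _ => hasDerivWithinAt_stripDeriv_snd hu x)
    (fun _ => hasDerivWithinAt_stripDeriv_snd_snd hu x) htt_cont (hb0 x) (hbπ x) n
  have hsum : sineCoeff (fun t => stripDeriv (stripDeriv (uncurry u)) (x, t) (1, 0) (1, 0)
      + stripDeriv (stripDeriv (uncurry u)) (x, t) (0, 1) (0, 1) + u x t) n = 0 := by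
    rw [sineCoeff, intervalIntegral.integral_congr_Ioo_of_le pi_pos.le (g := 0)
      fun t ht => by simp [hpde x t ht]]
    simp
  rw [sineCoeff_add ?_ hu_cont, sineCoeff_add hxx_cont htt_cont, htt] at hsum
  · convert hxx using 1
    linarith
  · exact hxx_cont.add htt_cont

end JacobiField

/-- Any solution of the Jacobi equation `u_{xx} + u_{tt} + u = 0` on the strip
`ℝ × [0,π]`, twice continuously differentiable up to the boundary, vanishing at
`t = 0, π`, and of at most polynomial growth, is of the form `(a + b x) sin t`. -/
theorem tempered_jacobi_fields_span (u : ℝ → ℝ → ℝ)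
    (hreg : ContDiffOn ℝ 2 (fun p : ℝ × ℝ => u p.1 p.2)
      (Set.univ ×ˢ Set.Icc 0 Real.pi))
    (hpde : ∀ x : ℝ, ∀ t ∈ Set.Ioo (0 : ℝ) Real.pi,
      deriv (fun a => deriv (fun b => u b t) a) x
        + deriv (fun a => deriv (fun b => u x b) a) t
        + u x t = 0)
    (hb0 : ∀ x : ℝ, u x 0 = 0) (hbpi : ∀ x : ℝ, u x Real.pi = 0)
    (hgrowth : ∃ C > (0 : ℝ), ∃ N : ℕ, ∀ x : ℝ, ∀ t ∈ Set.Icc (0 : ℝ) Real.pi,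
      |u x t| ≤ C * (1 + |x|) ^ N) :
    ∃ a b : ℝ, ∀ x : ℝ, ∀ t ∈ Set.Icc (0 : ℝ) Real.pi,
      u x t = (a + b * x) * Real.sin t := by
  obtain ⟨C, -, N, hgrowth⟩ := hgrowth
  have hu : ContDiffOn ℝ 2 (uncurry u) strip := hreg
  have hpde' := fun x t ht => laplacian_eq_stripDeriv hu x ht ▸ hpde x t ht
  set f := fun n x => sineCoeff (u x) n
  set g := fun n x => sineCoeff (fun t => stripDeriv (uncurry u) (x, t) (1, 0)) n
  have hf : ∀ n x, HasDerivAt (f n) (g n x) x := hasDerivAt_sineCoeff_apply hu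
  have hg : ∀ n x, HasDerivAt (g n) ((n ^ 2 - 1) * f n x) x :=
    hasDerivAt_sineCoeff_stripDeriv hu hpde' hb0 hbpi
  have hf_high : ∀ n, 2 ≤ n → ∀ x, f n x = 0 := fun n hn =>
    eq_zero_of_hasDerivAt_of_abs_le (by nlinarith [(Nat.ofNat_le_cast.2 hn : (2 : ℝ) ≤ n)])
      (hf n) (hg n) fun x => (abs_sineCoeff_le (hgrowth x) n).trans_eq (mul_assoc _ _ _).symm
  have hf_one : ∀ x, sineCoeff (u x) 1 = f 1 0 + g 1 0 * x :=
    eq_add_mul_of_hasDerivAt (hf 1) fun x => by simpa using hg 1 x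
  refine ⟨2 / π * f 1 0, 2 / π * g 1 0, fun x t ht => ?_⟩
  rw [eqOn_mul_sin_of_sineCoeff_eq_zero (φ := u x) (hu.continuousOn.comp_mk_strip x)
    (fun n hn => hf_high n hn x) ht, hf_one x]
  ring
end
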